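/- arXiv:math/0608065 — 4 statements merged into one kernel-verified Lean document; each statement's English description precedes it below -/
import Mathlib

section
/- Let Mⁿ = M₁ ×_ρ M₂ be a warped product with both factors of dimension greater than one, with product net (E₁, E₂) and warping function ρ on M₁. Let S = λΠ₁ + μΠ₂ be a Codazzi tensor on M with λ ≠ μ everywhere, where Πᵢ is orthogonal projection onto Eᵢ. Then λ is a constant A ∈ ℝ and μ = B(ρ∘π₁)^{−1} + A for some constant B ≠ 0. -/
lemma aux_fst_vert {E₁ E₂ : Type*} [NormedAddCommGroup E₁] [NormedSpace ℝ E₁]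
    [NormedAddCommGroup E₂] [NormedSpace ℝ E₂] (H : E₁ → ℝ) (p : E₁ × E₂) (y : E₂) :
    fderiv ℝ (fun q : E₁ × E₂ => H q.1) p (0, y) = 0 := by
  by_cases h : DifferentiableAt ℝ (fun q : E₁ × E₂ => H q.1) p
  · have hι : DifferentiableAt ℝ (fun x : E₁ => ((x, p.2) : E₁ × E₂)) p.1 :=
      (differentiableAt_fun_id.prodMk (differentiableAt_const _))
    have hH : DifferentiableAt ℝ H p.1 := by have := h.comp p.1 hι; exact this
    have hcomp : fderiv ℝ (fun q : E₁ × E₂ => H q.1) p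
        = (fderiv ℝ H p.1).comp (ContinuousLinearMap.fst ℝ E₁ E₂) := by
      have h2 : (fun q : E₁ × E₂ => H q.1) = H ∘ Prod.fst := rfl
      rw [h2, fderiv_comp (x := p) hH differentiableAt_fst, fderiv_fst]
    rw [hcomp]; simp
  · rw [fderiv_zero_of_not_differentiableAt h]; simp

lemma aux_snd_horiz {E₁ E₂ : Type*} [NormedAddCommGroup E₁] [NormedSpace ℝ E₁]
    [NormedAddCommGroup E₂] [NormedSpace ℝ E₂] (H : E₂ → ℝ) (p : E₁ × E₂) (x : E₁) :
    fderiv ℝ (fun q : E₁ × E₂ => H q.2) p (x, 0) = 0 := by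
  by_cases h : DifferentiableAt ℝ (fun q : E₁ × E₂ => H q.2) p
  · have hι : DifferentiableAt ℝ (fun y : E₂ => ((p.1, y) : E₁ × E₂)) p.2 :=
      ((differentiableAt_const _).prodMk differentiableAt_fun_id)
    have hH : DifferentiableAt ℝ H p.2 := by have := h.comp p.2 hι; exact this
    have hcomp : fderiv ℝ (fun q : E₁ × E₂ => H q.2) p
        = (fderiv ℝ H p.2).comp (ContinuousLinearMap.snd ℝ E₁ E₂) := by
      have h2 : (fun q : E₁ × E₂ => H q.2) = H ∘ Prod.snd := rfl
      rw [h2, fderiv_comp (x := p) hH differentiableAt_snd, fderiv_snd]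
    rw [hcomp]; simp
  · rw [fderiv_zero_of_not_differentiableAt h]; simp

lemma aux_indep {E : Type*} [NormedAddCommGroup E] [NormedSpace ℝ E] [FiniteDimensional ℝ E]
    (hd : 1 < Module.finrank ℝ E) (x : E) (hx : x ≠ 0) :
    ∃ x' : E, x' ∉ Submodule.span ℝ {x} := by
  by_contra h
  push_neg at h
  have htop : Submodule.span ℝ ({x} : Set E) = ⊤ := eq_top_iff.mpr fun z _ => h z
  have h1 := finrank_span_singleton (K := ℝ) hx
  rw [htop, finrank_top] at h1
  omega

set_option maxHeartbeats 4000000 in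
/-- A Codazzi tensor `S = λΠ₁ + μΠ₂` with `λ ≠ μ` everywhere on a warped product
`M₁ ×_ρ M₂` with both factors of dimension `> 1` has `λ ≡ A` constant and
`μ = B(ρ∘π₁)⁻¹ + A` with `B ≠ 0`. -/
theorem stmt14 {E₁ E₂ : Type*} [NormedAddCommGroup E₁] [NormedSpace ℝ E₁]
    [NormedAddCommGroup E₂] [NormedSpace ℝ E₂]
    [FiniteDimensional ℝ E₁] [FiniteDimensional ℝ E₂]
    (hd1 : 1 < Module.finrank ℝ E₁) (hd2 : 1 < Module.finrank ℝ E₂)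
    (g₁ : E₁ → E₁ →ₗ[ℝ] E₁ →ₗ[ℝ] ℝ) (g₂ : E₂ → E₂ →ₗ[ℝ] E₂ →ₗ[ℝ] ℝ)
    (hg₁ : ∀ x u, u ≠ 0 → 0 < g₁ x u u) (hg₂ : ∀ y u, u ≠ 0 → 0 < g₂ y u u)
    (ρ : E₁ → ℝ) (hρ : ∀ x, 0 < ρ x) (hρs : ContDiff ℝ (⊤ : ℕ∞) ρ)
    -- the warped product metric:
    (G : E₁ × E₂ → (E₁ × E₂) →ₗ[ℝ] (E₁ × E₂) →ₗ[ℝ] ℝ)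
    (hG : ∀ p u v, G p u v = g₁ p.1 u.1 v.1 + (ρ p.1) ^ 2 * g₂ p.2 u.2 v.2)
    -- its Levi-Civita connection:
    (conn : (E₁ × E₂ → E₁ × E₂) → (E₁ × E₂ → E₁ × E₂) → (E₁ × E₂ → E₁ × E₂))
    (hTF : ∀ X Y, ∀ p, conn X Y p - conn Y X p = fderiv ℝ Y p (X p) - fderiv ℝ X p (Y p))
    (hMC : ∀ X Y Z, ContDiff ℝ (⊤ : ℕ∞) Y → ContDiff ℝ (⊤ : ℕ∞) Z → ∀ p,
      fderiv ℝ (fun q => G q (Y q) (Z q)) p (X p)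
        = G p (conn X Y p) (Z p) + G p (Y p) (conn X Z p))
    (lam mu : E₁ × E₂ → ℝ) (hlams : ContDiff ℝ (⊤ : ℕ∞) lam) (hmus : ContDiff ℝ (⊤ : ℕ∞) mu)
    (hlm : ∀ p, lam p ≠ mu p)
    -- the tensor `S = λΠ₁ + μΠ₂`:
    (Sc : E₁ × E₂ → Module.End ℝ (E₁ × E₂))
    (hSc : ∀ p u, Sc p u = (lam p • u.1, mu p • u.2))
    -- the Codazzi equation:
    (hCod : ∀ X Y, ContDiff ℝ (⊤ : ℕ∞) X → ContDiff ℝ (⊤ : ℕ∞) Y → ∀ p,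
      conn X (fun q => Sc q (Y q)) p - Sc p (conn X Y p)
        = conn Y (fun q => Sc q (X q)) p - Sc p (conn Y X p)) :
    ∃ A B : ℝ, B ≠ 0 ∧ (∀ p, lam p = A) ∧ ∀ p : E₁ × E₂, mu p = B * (ρ p.1)⁻¹ + A := by
  -- positivity of G
  have hGpos : ∀ (p z : E₁ × E₂), z ≠ 0 → 0 < G p z z := by
    intro p z hz
    rw [hG]
    rcases eq_or_ne z.1 0 with h1 | h1
    · have h2 : z.2 ≠ 0 := by
        intro h2
        exact hz (Prod.ext h1 h2)
      have := mul_pos (pow_pos (hρ p.1) 2) (hg₂ p.2 z.2 h2)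
      rw [h1]; simpa using this
    · have ha := hg₁ p.1 z.1 h1
      have hb : 0 ≤ ρ p.1 ^ 2 * g₂ p.2 z.2 z.2 := by
        rcases eq_or_ne z.2 0 with h | h
        · simp [h]
        · exact le_of_lt (mul_pos (pow_pos (hρ p.1) 2) (hg₂ p.2 z.2 h))
      linarith
  have hGnd : ∀ (p z : E₁ × E₂), (∀ c, G p z c = 0) → z = 0 := by
    intro p z hc
    by_contra hz
    exact (hGpos p z hz).ne' (hc z)
  -- symmetry of Γ
  have hΓs : ∀ (p a b : E₁ × E₂),
      conn (fun _ => a) (fun _ => b) p = conn (fun _ => b) (fun _ => a) p := by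
    intro p a b
    have h := hTF (fun _ => a) (fun _ => b) p
    simp only [fderiv_fun_const, Pi.zero_apply, ContinuousLinearMap.zero_apply, sub_self] at h
    exact sub_eq_zero.mp h
  -- metric compatibility for constant fields
  have hM1 : ∀ (p a b w : E₁ × E₂), fderiv ℝ (fun q => G q a b) p w
      = G p (conn (fun _ => w) (fun _ => a) p) b + G p a (conn (fun _ => w) (fun _ => b) p) :=
    fun p a b w => hMC (fun _ => w) (fun _ => a) (fun _ => b) contDiff_const contDiff_const p
  -- smoothness of f • a fields
  have hfa : ∀ (f : E₁ × E₂ → ℝ), ContDiff ℝ (⊤ : ℕ∞) f → ∀ a : E₁ × E₂,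
      ContDiff ℝ (⊤ : ℕ∞) (fun q => f q • a) := fun f hf a => hf.smul contDiff_const
  have hdfa : ∀ (f : E₁ × E₂ → ℝ), ContDiff ℝ (⊤ : ℕ∞) f → ∀ (a : E₁ × E₂) (p w : E₁ × E₂),
      fderiv ℝ (fun q => f q • a) p w = fderiv ℝ f p w • a := by
    intro f hf a p w
    rw [fderiv_smul_const (hf.differentiable (by simp)).differentiableAt]
    simp
  -- block computations
  have hG11 : ∀ (p : E₁ × E₂) (x x' : E₁), G p (x, 0) (x', 0) = g₁ p.1 x x' := by
    intro p x x'; rw [hG]; simp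
  have hG22 : ∀ (p : E₁ × E₂) (y y' : E₂), G p (0, y) (0, y') = ρ p.1 ^ 2 * g₂ p.2 y y' := by
    intro p y y'; rw [hG]; simp
  have hGc1 : ∀ (p : E₁ × E₂) (x : E₁) (y : E₂), G p (x, 0) (0, y) = 0 := by
    intro p x y; rw [hG]; simp
  have hGc2 : ∀ (p : E₁ × E₂) (x : E₁) (y : E₂), G p (0, y) (x, 0) = 0 := by
    intro p x y; rw [hG]; simp
  -- effective Leibniz rule
  have hLEIB : ∀ (f : E₁ × E₂ → ℝ), ContDiff ℝ (⊤ : ℕ∞) f → ∀ (p a c u : E₁ × E₂),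
      fderiv ℝ (fun q => f q * G q a c) p u
        = f p * fderiv ℝ (fun q => G q a c) p u + fderiv ℝ f p u * G p a c := by
    intro f hf
    have hsum : ∀ (p a c u : E₁ × E₂),
        fderiv ℝ (fun q => f q * G q a c) p u + fderiv ℝ (fun q => f q * G q u a) p c
          = f p * (G p (conn (fun _ => a) (fun _ => u) p) c
              + G p u (conn (fun _ => a) (fun _ => c) p)
              + G p (conn (fun _ => c) (fun _ => u) p) a
              + G p a (conn (fun _ => u) (fun _ => c) p))
            + fderiv ℝ f p u * G p a c + fderiv ℝ f p c * G p u a := by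
      intro p a c u
      have r1 := hMC (fun _ => u) (fun q => f q • a) (fun _ => c) (hfa f hf a) contDiff_const p
      simp only [map_smul, LinearMap.smul_apply, smul_eq_mul] at r1
      have r3 := hMC (fun q => f q • a) (fun _ => u) (fun _ => c) contDiff_const contDiff_const p
      simp only [map_smul, smul_eq_mul] at r3
      have r5 := hMC (fun _ => c) (fun _ => u) (fun q => f q • a) contDiff_const (hfa f hf a) p
      simp only [map_smul, LinearMap.smul_apply, smul_eq_mul] at r5
      have t2 := hTF (fun q => f q • a) (fun _ => u) p
      simp only [fderiv_fun_const, Pi.zero_apply, ContinuousLinearMap.zero_apply,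
        hdfa f hf a p, zero_sub] at t2
      have v2 : conn (fun _ => u) (fun q => f q • a) p
          = conn (fun q => f q • a) (fun _ => u) p + fderiv ℝ f p u • a := by
        rw [sub_eq_iff_eq_add.mp t2]; abel
      have t4 := hTF (fun q => f q • a) (fun _ => c) p
      simp only [fderiv_fun_const, Pi.zero_apply, ContinuousLinearMap.zero_apply,
        hdfa f hf a p, zero_sub] at t4
      have v4 : conn (fun q => f q • a) (fun _ => c) p
          = conn (fun _ => c) (fun q => f q • a) p - fderiv ℝ f p c • a := by
        rw [sub_eq_iff_eq_add.mp t4]; abel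
      have s2 : G p (conn (fun _ => u) (fun q => f q • a) p) c
          = G p (conn (fun q => f q • a) (fun _ => u) p) c + fderiv ℝ f p u * G p a c := by
        rw [v2]; simp [map_add, map_smul, LinearMap.add_apply, LinearMap.smul_apply, smul_eq_mul]
      have s4 : G p u (conn (fun q => f q • a) (fun _ => c) p)
          = G p u (conn (fun _ => c) (fun q => f q • a) p) - fderiv ℝ f p c * G p u a := by
        rw [v4]; simp [map_sub, map_smul, smul_eq_mul]
      have hM1a := hM1 p u c a
      linear_combination r1 + s2 - r3 - s4 + r5 + f p * hM1a
    intro p a c u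
    have h1 := hsum p a c u
    have h2 := hsum p u a c
    have h3 := hsum p c u a
    rw [hΓs p u a] at h2 h3
    rw [hΓs p c a] at h2 h3
    rw [hΓs p u c] at h1 h2
    rw [hM1 p a c u, hΓs p u a, hΓs p u c]
    linear_combination h1 / 2 - h2 / 2 + h3 / 2
  -- Leibniz rule for the connection
  have hCL : ∀ (f : E₁ × E₂ → ℝ), ContDiff ℝ (⊤ : ℕ∞) f → ∀ (p a u : E₁ × E₂),
      conn (fun _ => u) (fun q => f q • a) p
        = fderiv ℝ f p u • a + f p • conn (fun _ => u) (fun _ => a) p := by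
    intro f hf p a u
    have key : ∀ c, G p (conn (fun _ => u) (fun q => f q • a) p
        - (fderiv ℝ f p u • a + f p • conn (fun _ => u) (fun _ => a) p)) c = 0 := by
      intro c
      have r1 := hMC (fun _ => u) (fun q => f q • a) (fun _ => c) (hfa f hf a) contDiff_const p
      simp only [map_smul, LinearMap.smul_apply, smul_eq_mul] at r1
      have r2 := hLEIB f hf p a c u
      have r3 := hM1 p a c u
      simp only [map_sub, map_add, map_smul, LinearMap.sub_apply, LinearMap.add_apply,
        LinearMap.smul_apply, smul_eq_mul]
      linear_combination r2 - r1 + f p * r3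
    have hz := hGnd p _ key
    exact sub_eq_zero.mp hz
  -- symmetrized Codazzi for constant fields
  have hCod0 : ∀ (p u v : E₁ × E₂),
      conn (fun _ => u) (fun q => Sc q v) p = conn (fun _ => v) (fun q => Sc q u) p := by
    intro p u v
    have h := hCod (fun _ => u) (fun _ => v) contDiff_const contDiff_const p
    beta_reduce at h
    rw [hΓs p v u] at h
    exact sub_left_inj.mp h
  -- the S-fields on each block
  have hS1 : ∀ x : E₁, (fun q => Sc q ((x, 0) : E₁ × E₂)) = fun q => lam q • ((x, 0) : E₁ × E₂) := by
    intro x; funext q; rw [hSc]; simp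
  have hS2 : ∀ y : E₂, (fun q => Sc q ((0, y) : E₁ × E₂)) = fun q => mu q • ((0, y) : E₁ × E₂) := by
    intro y; funext q; rw [hSc]; simp
  -- mixed Codazzi equation
  have hXmix : ∀ (p : E₁ × E₂) (x : E₁) (y : E₂),
      fderiv ℝ mu p (x, 0) • ((0, y) : E₁ × E₂) - fderiv ℝ lam p (0, y) • ((x, 0) : E₁ × E₂)
        = (lam p - mu p) • conn (fun _ => ((x, 0) : E₁ × E₂)) (fun _ => ((0, y) : E₁ × E₂)) p := by
    intro p x y
    have h := hCod0 p (x, 0) (0, y)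
    rw [hS2 y, hS1 x] at h
    rw [hCL mu hmus p (0, y) (x, 0), hCL lam hlams p (x, 0) (0, y)] at h
    rw [hΓs p (0, y) (x, 0)] at h
    rw [sub_smul, eq_sub_of_add_eq h.symm]
    abel
  -- same-block Codazzi, E₁
  have hX1 : ∀ (p : E₁ × E₂) (x x' : E₁),
      fderiv ℝ lam p (x, 0) • ((x', 0) : E₁ × E₂)
        = fderiv ℝ lam p (x', 0) • ((x, 0) : E₁ × E₂) := by
    intro p x x'
    have h := hCod0 p (x, 0) (x', 0)
    rw [hS1 x, hS1 x'] at h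
    rw [hCL lam hlams p (x', 0) (x, 0), hCL lam hlams p (x, 0) (x', 0)] at h
    rw [hΓs p (x', 0) (x, 0)] at h
    exact add_right_cancel h
  -- same-block Codazzi, E₂
  have hX2 : ∀ (p : E₁ × E₂) (y y' : E₂),
      fderiv ℝ mu p (0, y) • ((0, y') : E₁ × E₂)
        = fderiv ℝ mu p (0, y') • ((0, y) : E₁ × E₂) := by
    intro p y y'
    have h := hCod0 p (0, y) (0, y')
    rw [hS2 y, hS2 y'] at h
    rw [hCL mu hmus p (0, y') (0, y), hCL mu hmus p (0, y) (0, y')] at h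
    rw [hΓs p (0, y') (0, y)] at h
    exact add_right_cancel h
  -- lam is constant in E₁ directions
  have hlam1 : ∀ (p : E₁ × E₂) (x : E₁), fderiv ℝ lam p (x, (0 : E₂)) = 0 := by
    intro p x
    rcases eq_or_ne x 0 with rfl | hx
    · have h0 : ((0 : E₁), (0 : E₂)) = (0 : E₁ × E₂) := rfl
      rw [h0, map_zero]
    · obtain ⟨x', hx'⟩ := aux_indep hd1 x hx
      have h := hX1 p x x'
      have h1 : fderiv ℝ lam p (x, 0) • x' = fderiv ℝ lam p (x', 0) • x := by
        have := congrArg Prod.fst h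
        simpa using this
      by_contra hc
      apply hx'
      have hx'eq : x' = (fderiv ℝ lam p (x, (0 : E₂)))⁻¹ • (fderiv ℝ lam p (x', (0 : E₂)) • x) := by
        rw [← h1, smul_smul, inv_mul_cancel₀ hc, one_smul]
      rw [hx'eq]
      exact Submodule.smul_mem _ _ (Submodule.smul_mem _ _ (Submodule.mem_span_singleton_self x))
  -- mu is constant in E₂ directions
  have hmu2 : ∀ (p : E₁ × E₂) (y : E₂), fderiv ℝ mu p ((0 : E₁), y) = 0 := by
    intro p y
    rcases eq_or_ne y 0 with rfl | hy
    · have h0 : ((0 : E₁), (0 : E₂)) = (0 : E₁ × E₂) := rfl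
      rw [h0, map_zero]
    · obtain ⟨y', hy'⟩ := aux_indep hd2 y hy
      have h := hX2 p y y'
      have h1 : fderiv ℝ mu p (0, y) • y' = fderiv ℝ mu p (0, y') • y := by
        have := congrArg Prod.snd h
        simpa using this
      by_contra hc
      apply hy'
      have hy'eq : y' = (fderiv ℝ mu p ((0 : E₁), y))⁻¹ • (fderiv ℝ mu p ((0 : E₁), y') • y) := by
        rw [← h1, smul_smul, inv_mul_cancel₀ hc, one_smul]
      rw [hy'eq]
      exact Submodule.smul_mem _ _ (Submodule.smul_mem _ _ (Submodule.mem_span_singleton_self y))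
  -- lam is constant in E₂ directions
  have hlam2 : ∀ (p : E₁ × E₂) (y : E₂), fderiv ℝ lam p ((0 : E₁), y) = 0 := by
    intro p y
    have hnt : Nontrivial E₁ := Module.nontrivial_of_finrank_pos (R := ℝ) (by omega)
    obtain ⟨x, hx⟩ := exists_ne (0 : E₁)
    have hiii := hM1 p ((x, 0) : E₁ × E₂) ((x, 0) : E₁ × E₂) ((0, y) : E₁ × E₂)
    rw [show (fun q : E₁ × E₂ => G q ((x, 0) : E₁ × E₂) ((x, 0) : E₁ × E₂))
        = fun q : E₁ × E₂ => g₁ q.1 x x from funext fun q => hG11 q x x] at hiii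
    rw [aux_fst_vert (fun z => g₁ z x x) p y] at hiii
    rw [hΓs p ((0, y) : E₁ × E₂) ((x, 0) : E₁ × E₂)] at hiii
    have hm := hXmix p x y
    have hx1 := congrArg (fun z => G p z ((x, 0) : E₁ × E₂)) hm
    simp only [map_sub, map_smul, LinearMap.sub_apply, LinearMap.smul_apply, smul_eq_mul] at hx1
    rw [hGc2 p x y, hG11 p x x] at hx1
    have hx2 := congrArg (fun z => G p ((x, 0) : E₁ × E₂) z) hm
    simp only [map_sub, map_smul, smul_eq_mul] at hx2
    rw [hGc1 p x y, hG11 p x x] at hx2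
    have hpos := hg₁ p.1 x hx
    have h0 : fderiv ℝ lam p ((0 : E₁), y) * g₁ p.1 x x = 0 := by
      linear_combination (-1/2 : ℝ) * hx1 + (-1/2 : ℝ) * hx2 + ((lam p - mu p) / 2) * hiii
    exact (mul_eq_zero.mp h0).resolve_right (ne_of_gt hpos)
  -- radial equation for mu
  have hmu1 : ∀ (p : E₁ × E₂) (x : E₁),
      fderiv ℝ mu p (x, (0 : E₂)) * ρ p.1 = (lam p - mu p) * fderiv ℝ ρ p.1 x := by
    intro p x
    have hnt : Nontrivial E₂ := Module.nontrivial_of_finrank_pos (R := ℝ) (by omega)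
    obtain ⟨y, hy⟩ := exists_ne (0 : E₂)
    have hρne : ∀ q : E₁ × E₂, ρ q.1 * ρ q.1 ≠ 0 := fun q => (mul_pos (hρ q.1) (hρ q.1)).ne'
    have hrs : ContDiff ℝ (⊤ : ℕ∞) (fun q : E₁ × E₂ => ρ q.1) := hρs.comp contDiff_fst
    have hfs : ContDiff ℝ (⊤ : ℕ∞) (fun q : E₁ × E₂ => (ρ q.1 * ρ q.1)⁻¹) := (hrs.mul hrs).inv hρne
    -- derivative of ρ∘fst squared
    have hr1 : HasFDerivAt (fun q : E₁ × E₂ => ρ q.1)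
        ((fderiv ℝ ρ p.1).comp (ContinuousLinearMap.fst ℝ E₁ E₂)) p :=
      ((hρs.differentiable (by simp) p.1).hasFDerivAt).comp p hasFDerivAt_fst
    have hrrd : fderiv ℝ (fun q : E₁ × E₂ => ρ q.1 * ρ q.1) p (x, (0 : E₂))
        = 2 * ρ p.1 * fderiv ℝ ρ p.1 x := by
      rw [(hr1.fun_mul hr1).fderiv]
      simp
      ring
    -- product rule identity for the inverse
    have hone : (fun q : E₁ × E₂ => (ρ q.1 * ρ q.1)⁻¹ * (ρ q.1 * ρ q.1)) = fun _ => (1 : ℝ) :=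
      funext fun q => inv_mul_cancel₀ (hρne q)
    have hfd : DifferentiableAt ℝ (fun q : E₁ × E₂ => (ρ q.1 * ρ q.1)⁻¹) p :=
      (hfs.differentiable (by simp)).differentiableAt
    have hrrdiff : DifferentiableAt ℝ (fun q : E₁ × E₂ => ρ q.1 * ρ q.1) p :=
      ((hrs.mul hrs).differentiable (by simp)).differentiableAt
    have heq2' := fderiv_fun_mul hfd hrrdiff
    rw [hone, fderiv_fun_const] at heq2'
    have heq2 := congrArg (fun L : (E₁ × E₂) →L[ℝ] ℝ => L (x, (0 : E₂))) heq2'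
    simp only [Pi.zero_apply, ContinuousLinearMap.zero_apply, ContinuousLinearMap.add_apply,
      ContinuousLinearMap.coe_smul', Pi.smul_apply, smul_eq_mul] at heq2
    rw [hrrd] at heq2
    -- heq2 : 0 = f p * (2 ρ dρ) + (ρρ) * df(x,0)
    -- Leibniz for f · G(v,v)
    have hL := hLEIB (fun q : E₁ × E₂ => (ρ q.1 * ρ q.1)⁻¹) hfs p
      ((0, y) : E₁ × E₂) ((0, y) : E₁ × E₂) ((x, 0) : E₁ × E₂)
    have hfun : (fun q : E₁ × E₂ => (ρ q.1 * ρ q.1)⁻¹ * G q ((0, y) : E₁ × E₂) ((0, y) : E₁ × E₂))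
        = fun q : E₁ × E₂ => g₂ q.2 y y := by
      funext q
      rw [hG]
      simp only [map_zero, LinearMap.zero_apply]
      have hne : ρ q.1 ≠ 0 := (hρ q.1).ne'
      field_simp
      ring
    rw [hfun, aux_snd_horiz (fun z => g₂ z y y) p x, hM1 p ((0, y) : E₁ × E₂) ((0, y) : E₁ × E₂)
      ((x, 0) : E₁ × E₂), hG22 p y y] at hL
    -- hL : 0 = f p * (S1 + S2) + df(x,0) * (ρ² g₂ y y)
    -- Codazzi pairings
    have hm := hXmix p x y
    have hy1 := congrArg (fun z => G p z ((0, y) : E₁ × E₂)) hm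
    simp only [map_sub, map_smul, LinearMap.sub_apply, LinearMap.smul_apply, smul_eq_mul] at hy1
    rw [hG22 p y y, hGc1 p x y] at hy1
    have hy2 := congrArg (fun z => G p ((0, y) : E₁ × E₂) z) hm
    simp only [map_sub, map_smul, smul_eq_mul] at hy2
    rw [hG22 p y y, hGc2 p x y] at hy2
    -- algebra
    have hinv1 : (ρ p.1 * ρ p.1)⁻¹ * (ρ p.1 * ρ p.1) = 1 := inv_mul_cancel₀ (hρne p)
    have hS : G p (conn (fun _ => ((x, 0) : E₁ × E₂)) (fun _ => ((0, y) : E₁ × E₂)) p)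
          ((0, y) : E₁ × E₂)
        + G p ((0, y) : E₁ × E₂)
            (conn (fun _ => ((x, 0) : E₁ × E₂)) (fun _ => ((0, y) : E₁ × E₂)) p)
        = 2 * ρ p.1 * fderiv ℝ ρ p.1 x * g₂ p.2 y y := by
      have hρt : ρ p.1 * (ρ p.1)⁻¹ = 1 := mul_inv_cancel₀ (hρ p.1).ne'
      linear_combination (-(ρ p.1 ^ 2)) * hL
        + (ρ p.1 ^ 2 * g₂ p.2 y y) * heq2
        + ((G p (conn (fun _ => ((x, 0) : E₁ × E₂)) (fun _ => ((0, y) : E₁ × E₂)) p)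
              ((0, y) : E₁ × E₂)
            + G p ((0, y) : E₁ × E₂)
              (conn (fun _ => ((x, 0) : E₁ × E₂)) (fun _ => ((0, y) : E₁ × E₂)) p)
            - 2 * ρ p.1 * fderiv ℝ ρ p.1 x * g₂ p.2 y y))
          * (-(ρ p.1 * (ρ p.1)⁻¹ + 1)) * hρt
    have hkey : (fderiv ℝ mu p (x, (0 : E₂)) * ρ p.1 - (lam p - mu p) * fderiv ℝ ρ p.1 x)
        * (2 * ρ p.1 * g₂ p.2 y y) = 0 := by
      linear_combination hy1 + hy2 + (lam p - mu p) * hS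
    have hpos : (0 : ℝ) < 2 * ρ p.1 * g₂ p.2 y y :=
      mul_pos (mul_pos two_pos (hρ p.1)) (hg₂ p.2 y hy)
    have := (mul_eq_zero.mp hkey).resolve_right (ne_of_gt hpos)
    linarith [sub_eq_zero.mp this]
  -- lam has vanishing derivative everywhere
  have hlamd : ∀ p : E₁ × E₂, fderiv ℝ lam p = 0 := by
    intro p
    apply ContinuousLinearMap.ext
    intro w
    have hw : w = ((w.1, (0 : E₂)) : E₁ × E₂) + (((0 : E₁), w.2) : E₁ × E₂) := by
      ext <;> simp
    rw [hw, map_add, hlam1 p w.1, hlam2 p w.2]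
    simp
  have hlamc : ∀ p, lam p = lam 0 := fun p =>
    is_const_of_fderiv_eq_zero (hlams.differentiable (by simp)) hlamd p 0
  -- the function (mu - A) * ρ is constant
  have hρfst : ∀ p : E₁ × E₂, HasFDerivAt (fun q : E₁ × E₂ => ρ q.1)
      ((fderiv ℝ ρ p.1).comp (ContinuousLinearMap.fst ℝ E₁ E₂)) p := fun p =>
    ((hρs.differentiable (by simp) p.1).hasFDerivAt).comp p hasFDerivAt_fst
  have hFd : ∀ p : E₁ × E₂, fderiv ℝ (fun q : E₁ × E₂ => (mu q - lam 0) * ρ q.1) p = 0 := by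
    intro p
    have hmud : DifferentiableAt ℝ (fun q : E₁ × E₂ => mu q - lam 0) p :=
      ((hmus.differentiable (by simp)) p).sub_const (lam 0)
    have hrd : DifferentiableAt ℝ (fun q : E₁ × E₂ => ρ q.1) p := (hρfst p).differentiableAt
    rw [fderiv_fun_mul hmud hrd]
    apply ContinuousLinearMap.ext
    intro w
    have hw : w = ((w.1, (0 : E₂)) : E₁ × E₂) + (((0 : E₁), w.2) : E₁ × E₂) := by
      ext <;> simp
    rw [(hρfst p).fderiv, fderiv_sub_const]
    simp only [ContinuousLinearMap.add_apply, ContinuousLinearMap.coe_smul', Pi.smul_apply,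
      smul_eq_mul, ContinuousLinearMap.zero_apply, ContinuousLinearMap.coe_comp', Function.comp,
      ContinuousLinearMap.coe_fst']
    rw [hw]
    simp only [map_add]
    rw [hmu2 p w.2]
    have h1 := hmu1 p w.1
    rw [hlamc p] at h1
    have h2 : (((w.1, (0 : E₂)) : E₁ × E₂) + (((0 : E₁), w.2) : E₁ × E₂)).1 = w.1 := by simp
    rw [h2]
    linarith [h1]
  have hFdiff : Differentiable ℝ (fun q : E₁ × E₂ => (mu q - lam 0) * ρ q.1) :=
    ((hmus.differentiable (by simp)).sub_const (lam 0)).mul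
      ((hρs.differentiable (by simp)).comp differentiable_fst)
  have hFc : ∀ p : E₁ × E₂, (mu p - lam 0) * ρ p.1 = (mu 0 - lam 0) * ρ ((0 : E₁ × E₂)).1 :=
    fun p => is_const_of_fderiv_eq_zero hFdiff hFd p 0
  refine ⟨lam 0, (mu 0 - lam 0) * ρ ((0 : E₁ × E₂)).1, ?_, hlamc, ?_⟩
  · exact mul_ne_zero (sub_ne_zero.mpr (Ne.symm (hlm 0))) (hρ _).ne'
  · intro p
    have h := hFc p
    have hne : ρ p.1 ≠ 0 := (hρ p.1).ne'
    field_simp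
    linear_combination h
end

section
/- Let Mⁿ = M₁ × M₂ be a Riemannian product with both factors of dimension greater than one, and let S = λΠ₁ + μΠ₂ be a Codazzi tensor on M with λ ≠ μ everywhere, where Πᵢ is orthogonal projection onto the distribution tangent to the i-th factor. Then λ and μ are both constant. -/
section helpers
variable {E₁ E₂ : Type*} [NormedAddCommGroup E₁] [NormedSpace ℝ E₁]
  [NormedAddCommGroup E₂] [NormedSpace ℝ E₂]
  {g₁ : E₁ → E₁ →ₗ[ℝ] E₁ →ₗ[ℝ] ℝ} {g₂ : E₂ → E₂ →ₗ[ℝ] E₂ →ₗ[ℝ] ℝ}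
  {G : E₁ × E₂ → (E₁ × E₂) →ₗ[ℝ] (E₁ × E₂) →ₗ[ℝ] ℝ}
  {conn : (E₁ × E₂ → E₁ × E₂) → (E₁ × E₂ → E₁ × E₂) → (E₁ × E₂ → E₁ × E₂)}

/-- `fderiv` of a function factoring through the first coordinate kills pure
second-coordinate directions, without any differentiability assumption. -/
lemma gold_fst (φ : E₁ → ℝ) (p : E₁ × E₂) (v : E₂) :
    fderiv ℝ (fun q : E₁ × E₂ => φ q.1) p ((0 : E₁), v) = 0 := by
  by_cases hd : DifferentiableAt ℝ (fun q : E₁ × E₂ => φ q.1) p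
  · have h1 : DifferentiableAt ℝ (fun x : E₁ => ((x, p.2) : E₁ × E₂)) p.1 :=
      (differentiableAt_id.prodMk (differentiableAt_const _))
    have hφ : DifferentiableAt ℝ φ p.1 := by
      have := hd.comp (x := p.1) (g := fun q : E₁ × E₂ => φ q.1) h1
      exact this
    have hfst : DifferentiableAt ℝ (Prod.fst : E₁ × E₂ → E₁) p := differentiableAt_fst
    have hcomp : (fun q : E₁ × E₂ => φ q.1) = φ ∘ Prod.fst := rfl
    rw [hcomp, fderiv_comp p hφ hfst]
    simp [fderiv_fst]
  · simp [fderiv_zero_of_not_differentiableAt hd]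

/-- unconditional constant-multiple rule for applied `fderiv`. -/
lemma fderiv_const_mul' {E : Type*} [NormedAddCommGroup E] [NormedSpace ℝ E]
    (F : E → ℝ) (p z : E) (s : ℝ) :
    fderiv ℝ (fun q => s * F q) p z = s * fderiv ℝ F p z := by
  rcases eq_or_ne s 0 with rfl | hs
  · simp
  by_cases hd : DifferentiableAt ℝ F p
  · rw [fderiv_const_mul hd s]; simp
  · have hd2 : ¬ DifferentiableAt ℝ (fun q => s * F q) p := by
      intro h
      have : DifferentiableAt ℝ (fun q => s⁻¹ * (s * F q)) p := h.const_mul _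
      have he : (fun q => s⁻¹ * (s * F q)) = F := by
        funext q; field_simp
      rw [he] at this
      exact hd this
    rw [fderiv_zero_of_not_differentiableAt hd, fderiv_zero_of_not_differentiableAt hd2]
    simp

lemma Gpos (hg₁ : ∀ x u, u ≠ 0 → 0 < g₁ x u u) (hg₂ : ∀ y u, u ≠ 0 → 0 < g₂ y u u)
    (hG : ∀ p u v, G p u v = g₁ p.1 u.1 v.1 + g₂ p.2 u.2 v.2)
    (p w : E₁ × E₂) (hw : w ≠ 0) : 0 < G p w w := by
  rw [hG]
  have : w.1 ≠ 0 ∨ w.2 ≠ 0 := by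
    by_contra h
    push_neg at h
    exact hw (Prod.ext_iff.2 ⟨h.1, h.2⟩)
  have h1 : 0 ≤ g₁ p.1 w.1 w.1 := by
    rcases eq_or_ne w.1 0 with h | h
    · simp [h]
    · exact (hg₁ _ _ h).le
  have h2 : 0 ≤ g₂ p.2 w.2 w.2 := by
    rcases eq_or_ne w.2 0 with h | h
    · simp [h]
    · exact (hg₂ _ _ h).le
  rcases this with h | h
  · have := hg₁ p.1 w.1 h; linarith
  · have := hg₂ p.2 w.2 h; linarith

lemma Gzero_of_pair₁ (hg₁ : ∀ x u, u ≠ 0 → 0 < g₁ x u u) (hg₂ : ∀ y u, u ≠ 0 → 0 < g₂ y u u)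
    (hG : ∀ p u v, G p u v = g₁ p.1 u.1 v.1 + g₂ p.2 u.2 v.2)
    (p w : E₁ × E₂) (h : ∀ t, G p w t = 0) : w = 0 := by
  by_contra hw
  exact absurd (h w) (ne_of_gt (Gpos hg₁ hg₂ hG p w hw))

lemma Gcross₁ (hG : ∀ p u v, G p u v = g₁ p.1 u.1 v.1 + g₂ p.2 u.2 v.2)
    (q w z : E₁ × E₂) (h1 : w.1 = 0) (h2 : z.2 = 0) : G q w z = 0 := by
  rw [hG, h1, h2]; simp

lemma Gcross₂ (hG : ∀ p u v, G p u v = g₁ p.1 u.1 v.1 + g₂ p.2 u.2 v.2)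
    (q w z : E₁ × E₂) (h1 : w.2 = 0) (h2 : z.1 = 0) : G q w z = 0 := by
  rw [hG, h1, h2]; simp

/-- symmetry of `conn` on constant fields -/
lemma connConstSymm
    (hTF : ∀ X Y, ∀ p, conn X Y p - conn Y X p = fderiv ℝ Y p (X p) - fderiv ℝ X p (Y p))
    (a b : E₁ × E₂) (p : E₁ × E₂) :
    conn (fun _ => a) (fun _ => b) p = conn (fun _ => b) (fun _ => a) p := by
  have h := hTF (fun _ => a) (fun _ => b) p
  rw [fderiv_fun_const, fderiv_fun_const] at h
  simp only [Pi.zero_apply, ContinuousLinearMap.zero_apply, sub_self] at h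
  exact sub_eq_zero.mp h

/-- homogeneity of `conn` in a constant differentiated field -/
lemma connScale
    (hg₁ : ∀ x u, u ≠ 0 → 0 < g₁ x u u) (hg₂ : ∀ y u, u ≠ 0 → 0 < g₂ y u u)
    (hG : ∀ p u v, G p u v = g₁ p.1 u.1 v.1 + g₂ p.2 u.2 v.2)
    (hMC : ∀ X Y Z, ContDiff ℝ (⊤ : ℕ∞) Y → ContDiff ℝ (⊤ : ℕ∞) Z → ∀ p,
      fderiv ℝ (fun q => G q (Y q) (Z q)) p (X p)
        = G p (conn X Y p) (Z p) + G p (Y p) (conn X Z p))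
    (p z w : E₁ × E₂) (s : ℝ) :
    conn (fun _ => z) (fun _ => s • w) p = s • conn (fun _ => z) (fun _ => w) p := by
  have key : ∀ t : E₁ × E₂,
      G p (conn (fun _ => z) (fun _ => s • w) p - s • conn (fun _ => z) (fun _ => w) p) t = 0 := by
    intro t
    have h1 := hMC (fun _ => z) (fun _ => s • w) (fun _ => t) contDiff_const contDiff_const p
    have h2 := hMC (fun _ => z) (fun _ => w) (fun _ => t) contDiff_const contDiff_const p
    have hfun : (fun q => G q (s • w) t) = fun q => s * G q w t := by
      funext q; rw [map_smul]; simp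
    rw [hfun, fderiv_const_mul' (fun q => G q w t) p z s, h2] at h1
    have hsw : G p (s • w) (conn (fun _ => z) (fun _ => t) p)
        = s * G p w (conn (fun _ => z) (fun _ => t) p) := by
      rw [map_smul]; simp
    rw [hsw] at h1
    rw [map_sub, map_smul]
    simp only [LinearMap.sub_apply, LinearMap.smul_apply, smul_eq_mul]
    ring_nf
    ring_nf at h1
    linarith
  exact sub_eq_zero.mp (Gzero_of_pair₁ hg₁ hg₂ hG p _ key)

end helpers
section kill
variable {E₁ E₂ : Type*} [NormedAddCommGroup E₁] [NormedSpace ℝ E₁]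
  [NormedAddCommGroup E₂] [NormedSpace ℝ E₂]
  {g₁ : E₁ → E₁ →ₗ[ℝ] E₁ →ₗ[ℝ] ℝ} {g₂ : E₂ → E₂ →ₗ[ℝ] E₂ →ₗ[ℝ] ℝ}
  {G : E₁ × E₂ → (E₁ × E₂) →ₗ[ℝ] (E₁ × E₂) →ₗ[ℝ] ℝ}

/-- The linear-algebraic "kill" lemma: an antisymmetric operator whose pairings are a
rank-one multiple of a nonzero functional forces a contradiction. -/
lemma s4kill (hg₁ : ∀ x u, u ≠ 0 → 0 < g₁ x u u) (hg₂ : ∀ y u, u ≠ 0 → 0 < g₂ y u u)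
    (hG : ∀ p u v, G p u v = g₁ p.1 u.1 v.1 + g₂ p.2 u.2 v.2)
    (p : E₁ × E₂) (L : (E₁ × E₂) →L[ℝ] ℝ) (hL : L ≠ 0)
    (c' : E₁ × E₂) (hc' : c' ≠ 0) (δ : E₁ × E₂ → E₁ × E₂)
    (hanti : ∀ z t, G p (δ z) t + G p z (δ t) = 0)
    (hid : ∀ z t, G p (δ z) t + L z * G p c' t = 0) : False := by
  have hsec : ∀ z t, G p z (δ t) = L z * G p c' t := by
    intro z t
    have h1 := hanti z t
    have h2 := hid z t
    linarith
  by_cases hκ : ∀ t, G p c' t = 0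
  · exact absurd (hκ c') (ne_of_gt (Gpos hg₁ hg₂ hG p c' hc'))
  push_neg at hκ
  obtain ⟨t₁, ht₁⟩ := hκ
  set w : E₁ × E₂ := (G p c' t₁)⁻¹ • δ t₁ with hw
  have hwrep : ∀ z, G p z w = L z := by
    intro z
    rw [hw, map_smul, smul_eq_mul, hsec z t₁]
    field_simp
  have hwne : w ≠ 0 := by
    intro h0
    apply hL
    refine ContinuousLinearMap.ext fun z => ?_
    have := hwrep z
    rw [h0] at this
    simpa using this.symm
  have hg : 0 < G p w w := Gpos hg₁ hg₂ hG p w hwne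
  have hLw : L w = G p w w := (hwrep w).symm
  have hrep : ∀ t, δ t = G p c' t • w := by
    intro t
    have hz : ∀ z, G p z (δ t - G p c' t • w) = 0 := by
      intro z
      rw [map_sub, map_smul, smul_eq_mul, hsec z t, hwrep z]
      ring
    by_contra hne
    have hne' : δ t - G p c' t • w ≠ 0 := sub_ne_zero.mpr (fun h => hne (by rw [h]))
    exact absurd (hz (δ t - G p c' t • w)) (ne_of_gt (Gpos hg₁ hg₂ hG p _ hne'))
  have hii : ∀ t, G p c' w * G p w t + G p w w * G p c' t = 0 := by
    intro t
    have h := hid w t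
    rw [hrep w] at h
    rw [hLw] at h
    simpa [map_smul, smul_eq_mul, LinearMap.smul_apply, mul_comm] using h
  have hcw : G p c' w = 0 := by
    have := hii w
    nlinarith [hg]
  have hzero : ∀ t, G p c' t = 0 := by
    intro t
    have h := hii t
    have h2 : G p w w * G p c' t = 0 := by
      rw [hcw] at h
      linarith
    rcases mul_eq_zero.mp h2 with h3 | h3
    · exact absurd h3 (ne_of_gt hg)
    · exact h3
  exact ht₁ (hzero t₁)

end kill
section block
variable {E₁ E₂ : Type*} [NormedAddCommGroup E₁] [NormedSpace ℝ E₁]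
  [NormedAddCommGroup E₂] [NormedSpace ℝ E₂]
  [FiniteDimensional ℝ E₁] [FiniteDimensional ℝ E₂]

set_option maxHeartbeats 2000000 in
theorem blockLam
    (hd1 : 1 < Module.finrank ℝ E₁)
    {g₁ : E₁ → E₁ →ₗ[ℝ] E₁ →ₗ[ℝ] ℝ} {g₂ : E₂ → E₂ →ₗ[ℝ] E₂ →ₗ[ℝ] ℝ}
    (hg₁ : ∀ x u, u ≠ 0 → 0 < g₁ x u u) (hg₂ : ∀ y u, u ≠ 0 → 0 < g₂ y u u)
    {G : E₁ × E₂ → (E₁ × E₂) →ₗ[ℝ] (E₁ × E₂) →ₗ[ℝ] ℝ}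
    (hG : ∀ p u v, G p u v = g₁ p.1 u.1 v.1 + g₂ p.2 u.2 v.2)
    {conn : (E₁ × E₂ → E₁ × E₂) → (E₁ × E₂ → E₁ × E₂) → (E₁ × E₂ → E₁ × E₂)}
    (hTF : ∀ X Y, ∀ p, conn X Y p - conn Y X p = fderiv ℝ Y p (X p) - fderiv ℝ X p (Y p))
    (hMC : ∀ X Y Z, ContDiff ℝ (⊤ : ℕ∞) Y → ContDiff ℝ (⊤ : ℕ∞) Z → ∀ p,
      fderiv ℝ (fun q => G q (Y q) (Z q)) p (X p)
        = G p (conn X Y p) (Z p) + G p (Y p) (conn X Z p))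
    {lam mu : E₁ × E₂ → ℝ} (hlams : ContDiff ℝ (⊤ : ℕ∞) lam) (hmus : ContDiff ℝ (⊤ : ℕ∞) mu)
    {Sc : E₁ × E₂ → Module.End ℝ (E₁ × E₂)}
    (hSc : ∀ p u, Sc p u = (lam p • u.1, mu p • u.2))
    (hCod : ∀ X Y, ContDiff ℝ (⊤ : ℕ∞) X → ContDiff ℝ (⊤ : ℕ∞) Y → ∀ p,
      conn X (fun q => Sc q (Y q)) p - Sc p (conn X Y p)
        = conn Y (fun q => Sc q (X q)) p - Sc p (conn Y X p))
    (p : E₁ × E₂) (hl0 : lam p ≠ 0) (hne : fderiv ℝ lam p ≠ 0)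
    (u' : E₁) : fderiv ℝ lam p (u', (0 : E₂)) = 0 := by
  have hlamd : DifferentiableAt ℝ lam p := (hlams.differentiable (by simp)).differentiableAt
  -- ====================== step 2a ======================
  have h2a : ∀ c' : E₁ × E₂, c' ≠ 0 →
      ∀ t, DifferentiableAt ℝ (fun q => (lam q - lam p) * G q c' t) p := by
    intro c' hc'
    by_contra hnot
    push_neg at hnot
    obtain ⟨t₀, ht₀⟩ := hnot
    have hA's : ContDiff ℝ (⊤ : ℕ∞) (fun q => (lam q - lam p) • c') :=
      (hlams.sub contDiff_const).smul contDiff_const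
    have DA' : ∀ z : E₁ × E₂, fderiv ℝ (fun q => (lam q - lam p) • c') p z
        = (fderiv ℝ lam p z) • c' := by
      intro z
      rw [fderiv_smul_const (hlamd.sub_const _) c']
      rw [fderiv_sub_const]
      simp
    -- the δ operator
    set δ : E₁ × E₂ → E₁ × E₂ :=
      fun z => conn (fun q => (lam q - lam p) • c') (fun _ => z) p with hδdef
    -- X1 identity
    have X1 : ∀ z t : E₁ × E₂, fderiv ℝ (fun q => (lam q - lam p) * G q c' t) p z
        = G p (δ z) t + fderiv ℝ lam p z * G p c' t := by
      intro z t
      have h := hMC (fun _ => z) (fun q => (lam q - lam p) • c') (fun _ => t)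
        hA's contDiff_const p
      have hfun : (fun q => G q ((lam q - lam p) • c') t)
          = fun q => (lam q - lam p) * G q c' t := by
        funext q; rw [map_smul]; simp
      rw [hfun] at h
      have h0 : G p ((lam p - lam p) • c')
          (conn (fun _ => z) (fun _ => t) p) = 0 := by
        rw [sub_self, zero_smul, map_zero]
        simp
      have h' : fderiv ℝ (fun q => (lam q - lam p) * G q c' t) p z
          = G p (conn (fun _ => z) (fun q => (lam q - lam p) • c') p) t
            + G p ((lam p - lam p) • c') (conn (fun _ => z) (fun _ => t) p) := h
      rw [h0, add_zero] at h'
      -- hTF conversion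
      have htf := hTF (fun _ => z) (fun q => (lam q - lam p) • c') p
      rw [fderiv_fun_const] at htf
      simp only [Pi.zero_apply, ContinuousLinearMap.zero_apply, sub_zero] at htf
      rw [DA' z] at htf
      have hconv : conn (fun _ => z) (fun q => (lam q - lam p) • c') p
          = δ z + (fderiv ℝ lam p z) • c' := by
        rw [hδdef]
        rw [← htf]
        abel
      rw [hconv] at h'
      rw [h']
      rw [map_add, map_smul]
      simp only [LinearMap.add_apply, LinearMap.smul_apply, smul_eq_mul]
    -- antisymmetry
    have hanti : ∀ z t : E₁ × E₂, G p (δ z) t + G p z (δ t) = 0 := by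
      intro z t
      have h := hMC (fun q => (lam q - lam p) • c') (fun _ => z) (fun _ => t)
        contDiff_const contDiff_const p
      have hval : ((fun q => (lam q - lam p) • c') p) = (0 : E₁ × E₂) := by
        show (lam p - lam p) • c' = 0
        rw [sub_self, zero_smul]
      have h' : fderiv ℝ (fun q => G q z t) p ((lam p - lam p) • c')
          = G p (δ z) t + G p z (δ t) := h
      rw [sub_self, zero_smul, map_zero] at h'
      exact h'.symm
    -- values at non-differentiable t
    have hval : ∀ t : E₁ × E₂, ¬ DifferentiableAt ℝ (fun q => (lam q - lam p) * G q c' t) p →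
        ∀ z, G p (δ z) t + fderiv ℝ lam p z * G p c' t = 0 := by
      intro t ht z
      have := X1 z t
      rw [fderiv_zero_of_not_differentiableAt ht] at this
      simpa using this.symm
    -- extension to all t
    have hall : ∀ z t : E₁ × E₂, G p (δ z) t + fderiv ℝ lam p z * G p c' t = 0 := by
      intro z t
      by_cases hPt : DifferentiableAt ℝ (fun q => (lam q - lam p) * G q c' t) p
      · have hQ : ¬ DifferentiableAt ℝ (fun q => (lam q - lam p) * G q c' (t + t₀)) p := by
          intro h
          apply ht₀
          have heq : (fun q => (lam q - lam p) * G q c' t₀)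
              = fun q => (lam q - lam p) * G q c' (t + t₀)
                - (lam q - lam p) * G q c' t := by
            funext q
            rw [map_add]
            ring
          rw [heq]
          exact h.sub hPt
        have e1 := hval (t + t₀) hQ z
        have e0 := hval t₀ ht₀ z
        rw [map_add, map_add] at e1
        ring_nf at e1 e0 ⊢
        linarith
      · exact hval t hPt z
    exact s4kill hg₁ hg₂ hG p (fderiv ℝ lam p) hne c' hc' δ hanti hall
  -- ====================== step 2b ======================
  have h2b : ∀ c' : E₁ × E₂, c' ≠ 0 →
      ∀ t, DifferentiableAt ℝ (fun q => G q c' t) p := by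
    intro c' hc'
    by_contra hnot
    push_neg at hnot
    obtain ⟨t₀, ht₀⟩ := hnot
    have hD₁s : ContDiff ℝ (⊤ : ℕ∞) (fun q => lam q • c') := hlams.smul contDiff_const
    have DD₁ : ∀ z : E₁ × E₂, fderiv ℝ (fun q => lam q • c') p z
        = (fderiv ℝ lam p z) • c' := by
      intro z
      rw [fderiv_smul_const hlamd c']
      simp
    set δ : E₁ × E₂ → E₁ × E₂ := fun z =>
      conn (fun q => lam q • c') (fun _ => z) p
        - conn (fun _ => lam p • c') (fun _ => z) p with hδdef
    -- antisymmetry of δ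
    have hanti : ∀ z t : E₁ × E₂, G p (δ z) t + G p z (δ t) = 0 := by
      intro z t
      have h1 : fderiv ℝ (fun q => G q z t) p (lam p • c')
          = G p (conn (fun q => lam q • c') (fun _ => z) p) t
            + G p z (conn (fun q => lam q • c') (fun _ => t) p) :=
        hMC (fun q => lam q • c') (fun _ => z) (fun _ => t) contDiff_const contDiff_const p
      have h2 : fderiv ℝ (fun q => G q z t) p (lam p • c')
          = G p (conn (fun _ => lam p • c') (fun _ => z) p) t
            + G p z (conn (fun _ => lam p • c') (fun _ => t) p) :=
        hMC (fun _ => lam p • c') (fun _ => z) (fun _ => t) contDiff_const contDiff_const p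
      have h3 := h1.symm.trans h2
      rw [hδdef]
      simp only [map_sub, LinearMap.sub_apply]
      linarith
    -- identity at non-differentiable t
    have hval : ∀ t : E₁ × E₂, ¬ DifferentiableAt ℝ (fun q => G q c' t) p →
        ∀ z, G p (δ z) t + fderiv ℝ lam p z * G p c' t = 0 := by
      intro t ht z
      have hfh : DifferentiableAt ℝ (fun q => (lam q - lam p) * G q c' t) p :=
        h2a c' hc' t
      have hlh : ¬ DifferentiableAt ℝ (fun q => lam q * G q c' t) p := by
        intro h
        apply ht
        have heq : (fun q => G q c' t)
            = fun q => (lam p)⁻¹ * (lam q * G q c' t - (lam q - lam p) * G q c' t) := by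
          funext q
          have h3 : lam q * G q c' t - (lam q - lam p) * G q c' t = lam p * G q c' t := by
            ring
          rw [h3, inv_mul_cancel_left₀ hl0]
        rw [heq]
        exact ((h.sub hfh).const_mul _)
      -- (Y1)
      have hY1 : fderiv ℝ (fun q => lam q * G q c' t) p z
          = G p (conn (fun _ => z) (fun q => lam q • c') p) t
            + G p (lam p • c') (conn (fun _ => z) (fun _ => t) p) := by
        have h := hMC (fun _ => z) (fun q => lam q • c') (fun _ => t) hD₁s contDiff_const p
        have hfun : (fun q => G q (lam q • c') t) = fun q => lam q * G q c' t := by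
          funext q; rw [map_smul]; simp
        rw [hfun] at h
        exact h
      rw [fderiv_zero_of_not_differentiableAt hlh] at hY1
      -- conversion of the conn term
      have htf := hTF (fun _ => z) (fun q => lam q • c') p
      rw [fderiv_fun_const] at htf
      simp only [Pi.zero_apply, ContinuousLinearMap.zero_apply, sub_zero] at htf
      rw [DD₁ z] at htf
      have hsym : conn (fun _ => lam p • c') (fun _ => z) p
          = conn (fun _ => z) (fun _ => lam p • c') p := connConstSymm hTF _ _ p
      have hscale : conn (fun _ => z) (fun _ => lam p • c') p
          = lam p • conn (fun _ => z) (fun _ => c') p := connScale hg₁ hg₂ hG hMC p z c' (lam p)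
      have hDD : conn (fun _ => lam p • c') (fun _ => z) p
          = lam p • conn (fun _ => z) (fun _ => c') p := hsym.trans hscale
      have hconv : conn (fun _ => z) (fun q => lam q • c') p
          = δ z + lam p • conn (fun _ => z) (fun _ => c') p + (fderiv ℝ lam p z) • c' := by
        have hδz : δ z = conn (fun q => lam q • c') (fun _ => z) p
            - conn (fun _ => lam p • c') (fun _ => z) p := rfl
        rw [hδz, hDD, ← htf]
        abel
      rw [hconv] at hY1
      -- (Y2)
      have hY2 : fderiv ℝ (fun q => G q c' t) p z
          = G p (conn (fun _ => z) (fun _ => c') p) t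
            + G p c' (conn (fun _ => z) (fun _ => t) p) :=
        hMC (fun _ => z) (fun _ => c') (fun _ => t) contDiff_const contDiff_const p
      rw [fderiv_zero_of_not_differentiableAt ht] at hY2
      -- assemble
      have e1 : G p (δ z + lam p • conn (fun _ => z) (fun _ => c') p
            + (fderiv ℝ lam p z) • c') t
          = G p (δ z) t + lam p * G p (conn (fun _ => z) (fun _ => c') p) t
            + fderiv ℝ lam p z * G p c' t := by
        rw [map_add, map_add, map_smul, map_smul]
        simp only [LinearMap.add_apply, LinearMap.smul_apply, smul_eq_mul]
      have e2 : G p (lam p • c') (conn (fun _ => z) (fun _ => t) p)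
          = lam p * G p c' (conn (fun _ => z) (fun _ => t) p) := by
        rw [map_smul]; simp
      rw [e1, e2] at hY1
      simp only [ContinuousLinearMap.zero_apply] at hY1 hY2
      have hY2' : G p (conn (fun _ => z) (fun _ => c') p) t
          + G p c' (conn (fun _ => z) (fun _ => t) p) = 0 := hY2.symm
      linear_combination (-1 : ℝ) * hY1 - lam p * hY2'
    -- extension to all t
    have hall : ∀ z t : E₁ × E₂, G p (δ z) t + fderiv ℝ lam p z * G p c' t = 0 := by
      intro z t
      by_cases hPt : DifferentiableAt ℝ (fun q => G q c' t) p
      · have hQ : ¬ DifferentiableAt ℝ (fun q => G q c' (t + t₀)) p := by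
          intro h
          apply ht₀
          have heq : (fun q => G q c' t₀)
              = fun q => G q c' (t + t₀) - G q c' t := by
            funext q
            rw [map_add]
            ring
          rw [heq]
          exact h.sub hPt
        have e1 := hval (t + t₀) hQ z
        have e0 := hval t₀ ht₀ z
        rw [map_add, map_add] at e1
        ring_nf at e1 e0 ⊢
        linarith
      · exact hval t hPt z
    exact s4kill hg₁ hg₂ hG p (fderiv ℝ lam p) hne c' hc' δ hanti hall
  -- ====================== step 2c ======================
  have h2c : ∀ c' : E₁ × E₂, c' ≠ 0 → ∀ z t : E₁ × E₂,
      G p (conn (fun q => lam q • c') (fun _ => z) p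
        - conn (fun _ => lam p • c') (fun _ => z) p) t = 0 := by
    intro c' hc' z t
    have hD₁s : ContDiff ℝ (⊤ : ℕ∞) (fun q => lam q • c') := hlams.smul contDiff_const
    have DD₁ : ∀ z : E₁ × E₂, fderiv ℝ (fun q => lam q • c') p z
        = (fderiv ℝ lam p z) • c' := by
      intro z
      rw [fderiv_smul_const hlamd c']
      simp
    have hdiff : DifferentiableAt ℝ (fun q => G q c' t) p := h2b c' hc' t
    -- product rule
    have hprod : fderiv ℝ (fun q => lam q * G q c' t) p z
        = lam p * fderiv ℝ (fun q => G q c' t) p z + G p c' t * fderiv ℝ lam p z := by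
      rw [fderiv_fun_mul hlamd hdiff]
      simp [smul_eq_mul]
    -- (Y1) general
    have hY1 : fderiv ℝ (fun q => lam q * G q c' t) p z
        = G p (conn (fun _ => z) (fun q => lam q • c') p) t
          + lam p * G p c' (conn (fun _ => z) (fun _ => t) p) := by
      have h := hMC (fun _ => z) (fun q => lam q • c') (fun _ => t) hD₁s contDiff_const p
      have hfun : (fun q => G q (lam q • c') t) = fun q => lam q * G q c' t := by
        funext q; rw [map_smul]; simp
      rw [hfun] at h
      have e2 : G p (lam p • c') (conn (fun _ => z) (fun _ => t) p)
          = lam p * G p c' (conn (fun _ => z) (fun _ => t) p) := by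
        rw [map_smul]; simp
      rw [e2] at h
      exact h
    -- conversion
    have htf := hTF (fun _ => z) (fun q => lam q • c') p
    rw [fderiv_fun_const] at htf
    simp only [Pi.zero_apply, ContinuousLinearMap.zero_apply, sub_zero] at htf
    rw [DD₁ z] at htf
    have hsym : conn (fun _ => lam p • c') (fun _ => z) p
        = conn (fun _ => z) (fun _ => lam p • c') p := connConstSymm hTF _ _ p
    have hscale : conn (fun _ => z) (fun _ => lam p • c') p
        = lam p • conn (fun _ => z) (fun _ => c') p := connScale hg₁ hg₂ hG hMC p z c' (lam p)
    have hDD : conn (fun _ => lam p • c') (fun _ => z) p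
        = lam p • conn (fun _ => z) (fun _ => c') p := hsym.trans hscale
    have hconv : conn (fun _ => z) (fun q => lam q • c') p
        = (conn (fun q => lam q • c') (fun _ => z) p
            - conn (fun _ => lam p • c') (fun _ => z) p)
          + lam p • conn (fun _ => z) (fun _ => c') p + (fderiv ℝ lam p z) • c' := by
      rw [hDD, ← htf]
      abel
    rw [hconv] at hY1
    have e1 : G p ((conn (fun q => lam q • c') (fun _ => z) p
          - conn (fun _ => lam p • c') (fun _ => z) p)
          + lam p • conn (fun _ => z) (fun _ => c') p + (fderiv ℝ lam p z) • c') t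
        = G p (conn (fun q => lam q • c') (fun _ => z) p
            - conn (fun _ => lam p • c') (fun _ => z) p) t
          + lam p * G p (conn (fun _ => z) (fun _ => c') p) t
          + fderiv ℝ lam p z * G p c' t := by
      rw [map_add, map_add, map_smul, map_smul]
      simp only [LinearMap.add_apply, LinearMap.smul_apply, smul_eq_mul]
    rw [e1] at hY1
    -- (Y2) general
    have hY2 : fderiv ℝ (fun q => G q c' t) p z
        = G p (conn (fun _ => z) (fun _ => c') p) t
          + G p c' (conn (fun _ => z) (fun _ => t) p) :=
      hMC (fun _ => z) (fun _ => c') (fun _ => t) contDiff_const contDiff_const p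
    rw [hprod, hY2] at hY1
    linear_combination -hY1
  -- ====================== step 2d ======================
  rcases eq_or_ne u' (0 : E₁) with rfl | hu'
  · have h0 : ((0 : E₁), (0 : E₂)) = (0 : E₁ × E₂) := rfl
    rw [h0, map_zero]
  obtain ⟨u₃, hind⟩ := exists_linearIndependent_pair_of_one_lt_finrank hd1 hu'
  have hu₃ : u₃ ≠ 0 := by
    intro h0
    have := hind.ne_zero 1
    simp [h0] at this
  set x : E₁ × E₂ := (u', 0) with hxdef
  set x' : E₁ × E₂ := (u₃, 0) with hx'def
  have hxne : x ≠ 0 := by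
    intro h0
    exact hu' (congrArg Prod.fst h0)
  have hx'ne : x' ≠ 0 := by
    intro h0
    exact hu₃ (congrArg Prod.fst h0)
  have DD : ∀ (c' : E₁ × E₂) (z : E₁ × E₂), fderiv ℝ (fun q => lam q • c') p z
      = (fderiv ℝ lam p z) • c' := by
    intro c' z
    rw [fderiv_smul_const hlamd c']
    simp
  -- δ̂ vectors vanish
  have hδv : ∀ c' : E₁ × E₂, c' ≠ 0 → ∀ z : E₁ × E₂,
      conn (fun q => lam q • c') (fun _ => z) p
        = conn (fun _ => lam p • c') (fun _ => z) p := by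
    intro c' hc' z
    have := Gzero_of_pair₁ hg₁ hg₂ hG p _ (h2c c' hc' z)
    exact sub_eq_zero.mp this
  -- the a-vector
  have ha : conn (fun _ => x) (fun q => lam q • x') p
      = lam p • conn (fun _ => x) (fun _ => x') p + (fderiv ℝ lam p x) • x' := by
    have htf := hTF (fun _ => x) (fun q => lam q • x') p
    rw [fderiv_fun_const] at htf
    simp only [Pi.zero_apply, ContinuousLinearMap.zero_apply, sub_zero] at htf
    rw [DD x' x] at htf
    rw [hδv x' hx'ne x] at htf
    have hsym : conn (fun _ => lam p • x') (fun _ => x) p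
        = conn (fun _ => x) (fun _ => lam p • x') p := connConstSymm hTF _ _ p
    have hscale : conn (fun _ => x) (fun _ => lam p • x') p
        = lam p • conn (fun _ => x) (fun _ => x') p := connScale hg₁ hg₂ hG hMC p x x' (lam p)
    rw [hsym, hscale] at htf
    rw [← htf]
    abel
  have hb : conn (fun _ => x') (fun q => lam q • x) p
      = lam p • conn (fun _ => x') (fun _ => x) p + (fderiv ℝ lam p x') • x := by
    have htf := hTF (fun _ => x') (fun q => lam q • x) p
    rw [fderiv_fun_const] at htf
    simp only [Pi.zero_apply, ContinuousLinearMap.zero_apply, sub_zero] at htf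
    rw [DD x x'] at htf
    rw [hδv x hxne x'] at htf
    have hsym : conn (fun _ => lam p • x) (fun _ => x') p
        = conn (fun _ => x') (fun _ => lam p • x) p := connConstSymm hTF _ _ p
    have hscale : conn (fun _ => x') (fun _ => lam p • x) p
        = lam p • conn (fun _ => x') (fun _ => x) p := connScale hg₁ hg₂ hG hMC p x' x (lam p)
    rw [hsym, hscale] at htf
    rw [← htf]
    abel
  -- Codazzi with two constant fields
  have hcod := hCod (fun _ => x) (fun _ => x') contDiff_const contDiff_const p
  have hSx : (fun q => Sc q x) = fun q => lam q • x := by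
    funext q
    rw [hSc]
    rw [hxdef]
    ext <;> simp
  have hSx' : (fun q => Sc q x') = fun q => lam q • x' := by
    funext q
    rw [hSc]
    rw [hx'def]
    ext <;> simp
  rw [hSx, hSx'] at hcod
  have hQsym : conn (fun _ => x') (fun _ => x) p
      = conn (fun _ => x) (fun _ => x') p := connConstSymm hTF _ _ p
  rw [hQsym] at hcod
  have hab : conn (fun _ => x) (fun q => lam q • x') p
      = conn (fun _ => x') (fun q => lam q • x) p := sub_left_inj.mp hcod
  rw [ha, hb, hQsym] at hab
  have hcancel : (fderiv ℝ lam p x) • x' = (fderiv ℝ lam p x') • x := by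
    exact add_left_cancel hab
  -- first components
  have hfst : (fderiv ℝ lam p x) • u₃ = (fderiv ℝ lam p x') • u' := by
    have := congrArg Prod.fst hcancel
    simpa [hxdef, hx'def] using this
  -- linear independence
  have hli := LinearIndependent.pair_iff.mp hind
      (- fderiv ℝ lam p x') (fderiv ℝ lam p x)
  have heq : (- fderiv ℝ lam p x') • u' + (fderiv ℝ lam p x) • u₃ = 0 := by
    rw [hfst]
    rw [neg_smul]
    abel
  exact (hli heq).2

end block
section mixed
variable {E₁ E₂ : Type*} [NormedAddCommGroup E₁] [NormedSpace ℝ E₁]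
  [NormedAddCommGroup E₂] [NormedSpace ℝ E₂]
  [FiniteDimensional ℝ E₁] [FiniteDimensional ℝ E₂]

set_option maxHeartbeats 1000000 in
theorem mixedLam
    (hd1 : 1 < Module.finrank ℝ E₁)
    {g₁ : E₁ → E₁ →ₗ[ℝ] E₁ →ₗ[ℝ] ℝ} {g₂ : E₂ → E₂ →ₗ[ℝ] E₂ →ₗ[ℝ] ℝ}
    (hg₁ : ∀ x u, u ≠ 0 → 0 < g₁ x u u) (hg₂ : ∀ y u, u ≠ 0 → 0 < g₂ y u u)
    {G : E₁ × E₂ → (E₁ × E₂) →ₗ[ℝ] (E₁ × E₂) →ₗ[ℝ] ℝ}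
    (hG : ∀ p u v, G p u v = g₁ p.1 u.1 v.1 + g₂ p.2 u.2 v.2)
    {conn : (E₁ × E₂ → E₁ × E₂) → (E₁ × E₂ → E₁ × E₂) → (E₁ × E₂ → E₁ × E₂)}
    (hTF : ∀ X Y, ∀ p, conn X Y p - conn Y X p = fderiv ℝ Y p (X p) - fderiv ℝ X p (Y p))
    (hMC : ∀ X Y Z, ContDiff ℝ (⊤ : ℕ∞) Y → ContDiff ℝ (⊤ : ℕ∞) Z → ∀ p,
      fderiv ℝ (fun q => G q (Y q) (Z q)) p (X p)
        = G p (conn X Y p) (Z p) + G p (Y p) (conn X Z p))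
    {lam mu : E₁ × E₂ → ℝ} (hlams : ContDiff ℝ (⊤ : ℕ∞) lam) (hmus : ContDiff ℝ (⊤ : ℕ∞) mu)
    {Sc : E₁ × E₂ → Module.End ℝ (E₁ × E₂)}
    (hSc : ∀ p u, Sc p u = (lam p • u.1, mu p • u.2))
    (hCod : ∀ X Y, ContDiff ℝ (⊤ : ℕ∞) X → ContDiff ℝ (⊤ : ℕ∞) Y → ∀ p,
      conn X (fun q => Sc q (Y q)) p - Sc p (conn X Y p)
        = conn Y (fun q => Sc q (X q)) p - Sc p (conn Y X p))
    (p : E₁ × E₂) (v : E₂) : fderiv ℝ lam p ((0 : E₁), v) = 0 := by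
  have hnt : Nontrivial E₁ :=
    Module.nontrivial_of_finrank_pos (R := ℝ) (by omega : 0 < Module.finrank ℝ E₁)
  obtain ⟨u, hu⟩ := exists_ne (0 : E₁)
  set x : E₁ × E₂ := (u, 0) with hxdef
  set y : E₁ × E₂ := ((0 : E₁), v) with hydef
  have hlamd : DifferentiableAt ℝ lam p := (hlams.differentiable (by simp)).differentiableAt
  have hmud : DifferentiableAt ℝ mu p := (hmus.differentiable (by simp)).differentiableAt
  -- smooth fields
  have hScXs : ContDiff ℝ (⊤ : ℕ∞) (fun q => lam q • x) := hlams.smul contDiff_const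
  have hScYs : ContDiff ℝ (⊤ : ℕ∞) (fun q => mu q • y) := hmus.smul contDiff_const
  -- derivative of the field lam • x
  have DerScX : ∀ w : E₁ × E₂, fderiv ℝ (fun q => lam q • x) p w = (fderiv ℝ lam p w) • x := by
    intro w
    rw [fderiv_smul_const hlamd x]
    simp
  -- hMC for identically-vanishing scalar products
  have hMC0 : ∀ (X' Y' Z' : E₁ × E₂ → E₁ × E₂), ContDiff ℝ (⊤ : ℕ∞) Y' → ContDiff ℝ (⊤ : ℕ∞) Z' →
      (∀ q, G q (Y' q) (Z' q) = 0) →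
      G p (conn X' Y' p) (Z' p) + G p (Y' p) (conn X' Z' p) = 0 := by
    intro X' Y' Z' hY hZ h0
    have h := hMC X' Y' Z' hY hZ p
    rw [show (fun q => G q (Y' q) (Z' q)) = (fun _ => (0 : ℝ)) from funext h0] at h
    rw [fderiv_fun_const] at h
    simpa using h.symm
  -- basic cross-vanishing at any q
  have hx2 : x.2 = 0 := rfl
  have hy1 : y.1 = 0 := rfl
  have hsx2 : ∀ q, ((lam q • x).2 : E₂) = 0 := fun q => by
    show lam q • x.2 = 0
    rw [hx2, smul_zero]
  have hsy1 : ∀ q, ((mu q • y).1 : E₁) = 0 := fun q => by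
    show mu q • y.1 = 0
    rw [hy1, smul_zero]
  -- abbreviations for the conn-values
  set P := conn (fun _ => x) (fun _ => y) p with hPdef
  set Rxx := conn (fun _ => x) (fun _ => x) p with hRdef
  set a := conn (fun _ => x) (fun q => mu q • y) p with hadef
  set b := conn (fun _ => y) (fun q => lam q • x) p with hbdef
  set t₂ := conn (fun _ => x) (fun q => lam q • x) p with ht2def
  -- symmetry of P
  have hPsym : conn (fun _ => y) (fun _ => x) p = P := connConstSymm hTF y x p
  -- Codazzi: a = b
  have hab : a = b := by
    have h := hCod (fun _ => x) (fun _ => y) contDiff_const contDiff_const p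
    have h1 : (fun q => Sc q y) = (fun q => mu q • y) := by
      funext q
      rw [hSc]
      rw [hydef]
      ext <;> simp
    have h2 : (fun q => Sc q x) = (fun q => lam q • x) := by
      funext q
      rw [hSc]
      rw [hxdef]
      ext <;> simp
    rw [h1, h2, hPsym] at h
    rw [hadef, hbdef]
    exact sub_left_inj.mp h
  -- (e2): G p x a = mu p * G p x P
  have he2 : G p x a = mu p * G p x P := by
    have i1 := hMC0 (fun _ => x) (fun _ => x) (fun q => mu q • y) contDiff_const hScYs
      (fun q => Gcross₂ hG q x (mu q • y) hx2 (hsy1 q))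
    have i2 := hMC0 (fun _ => x) (fun _ => x) (fun _ => y) contDiff_const contDiff_const
      (fun q => Gcross₂ hG q x y hx2 hy1)
    simp only [← hRdef, ← hPdef, ← hadef] at i1 i2
    have hs : G p Rxx (mu p • y) = mu p * G p Rxx y := by rw [map_smul]; simp
    rw [hs] at i1
    linear_combination i1 - mu p * i2
  -- (e2'): G p a x = mu p * G p P x
  have he2' : G p a x = mu p * G p P x := by
    have i3 := hMC0 (fun _ => x) (fun q => mu q • y) (fun _ => x) hScYs contDiff_const
      (fun q => Gcross₁ hG q (mu q • y) x (hsy1 q) hx2)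
    have i4 := hMC0 (fun _ => x) (fun _ => y) (fun _ => x) contDiff_const contDiff_const
      (fun q => Gcross₁ hG q y x hy1 hx2)
    simp only [← hRdef, ← hPdef, ← hadef] at i3 i4
    have hs : G p (mu p • y) Rxx = mu p * G p y Rxx := by rw [map_smul]; simp
    rw [hs] at i3
    linear_combination i3 - mu p * i4
  -- (e3): G p t₂ y = -(lam p * G p x P)
  have he3 : G p t₂ y = -(lam p * G p x P) := by
    have i5 := hMC0 (fun _ => x) (fun q => lam q • x) (fun _ => y) hScXs contDiff_const
      (fun q => Gcross₂ hG q (lam q • x) y (hsx2 q) hy1)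
    simp only [← ht2def, ← hPdef] at i5
    have hs : G p (lam p • x) P = lam p * G p x P := by rw [map_smul]; simp
    rw [hs] at i5
    linarith
  -- (e3'): G p y t₂ = -(lam p * G p P x)
  have he3' : G p y t₂ = -(lam p * G p P x) := by
    have i6 := hMC0 (fun _ => x) (fun _ => y) (fun q => lam q • x) contDiff_const hScXs
      (fun q => Gcross₁ hG q y (lam q • x) hy1 (hsx2 q))
    simp only [← hPdef, ← ht2def] at i6
    have hs : G p P (lam p • x) = lam p * G p P x := by rw [map_smul]; simp
    rw [hs] at i6
    linarith
  -- hTF relations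
  have he4 : conn (fun q => lam q • x) (fun _ => x) p = t₂ - (fderiv ℝ lam p x) • x := by
    have h := hTF (fun _ => x) (fun q => lam q • x) p
    rw [fderiv_fun_const] at h
    simp only [Pi.zero_apply, ContinuousLinearMap.zero_apply, sub_zero] at h
    rw [DerScX x] at h
    rw [← ht2def] at h
    rw [← h]; abel
  have he5 : conn (fun q => lam q • x) (fun _ => y) p = b - (fderiv ℝ lam p y) • x := by
    have h := hTF (fun _ => y) (fun q => lam q • x) p
    rw [fderiv_fun_const] at h
    simp only [Pi.zero_apply, ContinuousLinearMap.zero_apply, sub_zero] at h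
    rw [DerScX y] at h
    rw [← hbdef] at h
    rw [← h]; abel
  -- C1
  have hC1 : G p t₂ y + G p x b - fderiv ℝ lam p y * G p x x = 0 := by
    have i7 : G p (conn (fun q => lam q • x) (fun _ => x) p) y
        + G p x (conn (fun q => lam q • x) (fun _ => y) p) = 0 :=
      hMC0 (fun q => lam q • x) (fun _ => x) (fun _ => y) contDiff_const contDiff_const
      (fun q => Gcross₂ hG q x y hx2 hy1)
    rw [he4, he5] at i7
    have e1 : G p (t₂ - fderiv ℝ lam p x • x) y = G p t₂ y - fderiv ℝ lam p x * G p x y := by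
      rw [map_sub, map_smul]; simp
    have e2 : G p x (b - fderiv ℝ lam p y • x) = G p x b - fderiv ℝ lam p y * G p x x := by
      rw [map_sub, map_smul]; simp
    have hxy : G p x y = 0 := Gcross₂ hG p x y hx2 hy1
    rw [e1, e2, hxy] at i7
    linarith
  -- C1'
  have hC1' : G p b x - fderiv ℝ lam p y * G p x x + G p y t₂ = 0 := by
    have i8 : G p (conn (fun q => lam q • x) (fun _ => y) p) x
        + G p y (conn (fun q => lam q • x) (fun _ => x) p) = 0 :=
      hMC0 (fun q => lam q • x) (fun _ => y) (fun _ => x) contDiff_const contDiff_const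
      (fun q => Gcross₁ hG q y x hy1 hx2)
    rw [he4, he5] at i8
    have e1 : G p (b - fderiv ℝ lam p y • x) x = G p b x - fderiv ℝ lam p y * G p x x := by
      rw [map_sub, map_smul]; simp
    have e2 : G p y (t₂ - fderiv ℝ lam p x • x) = G p y t₂ - fderiv ℝ lam p x * G p y x := by
      rw [map_sub, map_smul]; simp
    have hyx : G p y x = 0 := Gcross₁ hG p y x hy1 hx2
    rw [e1, e2, hyx] at i8
    linarith
  -- M1 via GOLD
  have hM1 : G p P x + G p x P = 0 := by
    have i9 : fderiv ℝ (fun q => G q x x) p y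
        = G p (conn (fun _ => y) (fun _ => x) p) x + G p x (conn (fun _ => y) (fun _ => x) p) :=
      hMC (fun _ => y) (fun _ => x) (fun _ => x) contDiff_const contDiff_const p
    have hfun : (fun q => G q x x) = (fun q : E₁ × E₂ => (g₁ q.1 u) u) := by
      funext q
      rw [hG]
      rw [hxdef]
      simp
    rw [hfun, hPsym] at i9
    have hgold : fderiv ℝ (fun q : E₁ × E₂ => (g₁ q.1 u) u) p y = 0 :=
      gold_fst (E₂ := E₂) (fun w => (g₁ w u) u) p v
    rw [hgold] at i9
    linarith [i9]
  -- final combination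
  have hGxx : 0 < G p x x := by
    apply Gpos hg₁ hg₂ hG
    intro h0
    apply hu
    have : x.1 = (0 : E₁) := by rw [h0]; rfl
    exact this
  -- from C1: -(λp GxP) + μp GxP - ∂λy Gxx = 0
  have hstar : -(lam p * G p x P) + mu p * G p x P - fderiv ℝ lam p y * G p x x = 0 := by
    have := hC1
    rw [he3] at this
    rw [hab] at he2
    rw [he2] at this
    linarith
  have hstar' : mu p * G p P x - fderiv ℝ lam p y * G p x x - lam p * G p P x = 0 := by
    have := hC1'
    rw [he3'] at this
    rw [hab] at he2'
    rw [he2'] at this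
    linarith
  have hfin : fderiv ℝ lam p y * G p x x = 0 := by
    linear_combination (-1/2 : ℝ) * hstar + (-1/2 : ℝ) * hstar' + ((mu p - lam p)/2) * hM1
  have := mul_eq_zero.mp hfin
  rcases this with h | h
  · exact h
  · exact absurd h (ne_of_gt hGxx)

end mixed
section key
variable {E₁ E₂ : Type*} [NormedAddCommGroup E₁] [NormedSpace ℝ E₁]
  [NormedAddCommGroup E₂] [NormedSpace ℝ E₂]
  [FiniteDimensional ℝ E₁] [FiniteDimensional ℝ E₂]

theorem keyLam
    (hd1 : 1 < Module.finrank ℝ E₁)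
    {g₁ : E₁ → E₁ →ₗ[ℝ] E₁ →ₗ[ℝ] ℝ} {g₂ : E₂ → E₂ →ₗ[ℝ] E₂ →ₗ[ℝ] ℝ}
    (hg₁ : ∀ x u, u ≠ 0 → 0 < g₁ x u u) (hg₂ : ∀ y u, u ≠ 0 → 0 < g₂ y u u)
    {G : E₁ × E₂ → (E₁ × E₂) →ₗ[ℝ] (E₁ × E₂) →ₗ[ℝ] ℝ}
    (hG : ∀ p u v, G p u v = g₁ p.1 u.1 v.1 + g₂ p.2 u.2 v.2)
    {conn : (E₁ × E₂ → E₁ × E₂) → (E₁ × E₂ → E₁ × E₂) → (E₁ × E₂ → E₁ × E₂)}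
    (hTF : ∀ X Y, ∀ p, conn X Y p - conn Y X p = fderiv ℝ Y p (X p) - fderiv ℝ X p (Y p))
    (hMC : ∀ X Y Z, ContDiff ℝ (⊤ : ℕ∞) Y → ContDiff ℝ (⊤ : ℕ∞) Z → ∀ p,
      fderiv ℝ (fun q => G q (Y q) (Z q)) p (X p)
        = G p (conn X Y p) (Z p) + G p (Y p) (conn X Z p))
    {lam mu : E₁ × E₂ → ℝ} (hlams : ContDiff ℝ (⊤ : ℕ∞) lam) (hmus : ContDiff ℝ (⊤ : ℕ∞) mu)
    {Sc : E₁ × E₂ → Module.End ℝ (E₁ × E₂)}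
    (hSc : ∀ p u, Sc p u = (lam p • u.1, mu p • u.2))
    (hCod : ∀ X Y, ContDiff ℝ (⊤ : ℕ∞) X → ContDiff ℝ (⊤ : ℕ∞) Y → ∀ p,
      conn X (fun q => Sc q (Y q)) p - Sc p (conn X Y p)
        = conn Y (fun q => Sc q (X q)) p - Sc p (conn Y X p)) :
    ∀ p, fderiv ℝ lam p = 0 := by
  have blockfull : ∀ q, lam q ≠ 0 → fderiv ℝ lam q = 0 := by
    intro q hq
    by_cases hne : fderiv ℝ lam q = 0
    · exact hne
    · refine ContinuousLinearMap.ext fun w => ?_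
      have h1 : fderiv ℝ lam q (w.1, (0 : E₂)) = 0 :=
        blockLam hd1 hg₁ hg₂ hG hTF hMC hlams hmus hSc hCod q hq hne w.1
      have h2 : fderiv ℝ lam q ((0 : E₁), w.2) = 0 :=
        mixedLam hd1 hg₁ hg₂ hG hTF hMC hlams hmus hSc hCod q w.2
      have hw : w = (w.1, (0 : E₂)) + ((0 : E₁), w.2) := by
        ext <;> simp
      calc fderiv ℝ lam q w = fderiv ℝ lam q ((w.1, (0 : E₂)) + ((0 : E₁), w.2)) := by
              rw [← hw]
        _ = fderiv ℝ lam q (w.1, (0 : E₂)) + fderiv ℝ lam q ((0 : E₁), w.2) := map_add _ _ _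
        _ = 0 := by rw [h1, h2]; simp
  intro p
  by_cases hne : fderiv ℝ lam p = 0
  · exact hne
  by_cases hl0 : lam p = 0
  · have hcont : Continuous (fun q => fderiv ℝ lam q) := hlams.continuous_fderiv (by simp)
    have hev : ∀ᶠ q in nhds p, fderiv ℝ lam q ≠ 0 := hcont.continuousAt.eventually_ne hne
    have hev0 : lam =ᶠ[nhds p] (fun _ => (0 : ℝ)) := by
      filter_upwards [hev] with q hq
      by_contra h
      exact hq (blockfull q h)
    have h := hev0.fderiv_eq (𝕜 := ℝ)
    rw [fderiv_fun_const] at h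
    simpa using h
  · exact blockfull p hl0

theorem constLam
    (hd1 : 1 < Module.finrank ℝ E₁)
    {g₁ : E₁ → E₁ →ₗ[ℝ] E₁ →ₗ[ℝ] ℝ} {g₂ : E₂ → E₂ →ₗ[ℝ] E₂ →ₗ[ℝ] ℝ}
    (hg₁ : ∀ x u, u ≠ 0 → 0 < g₁ x u u) (hg₂ : ∀ y u, u ≠ 0 → 0 < g₂ y u u)
    {G : E₁ × E₂ → (E₁ × E₂) →ₗ[ℝ] (E₁ × E₂) →ₗ[ℝ] ℝ}
    (hG : ∀ p u v, G p u v = g₁ p.1 u.1 v.1 + g₂ p.2 u.2 v.2)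
    {conn : (E₁ × E₂ → E₁ × E₂) → (E₁ × E₂ → E₁ × E₂) → (E₁ × E₂ → E₁ × E₂)}
    (hTF : ∀ X Y, ∀ p, conn X Y p - conn Y X p = fderiv ℝ Y p (X p) - fderiv ℝ X p (Y p))
    (hMC : ∀ X Y Z, ContDiff ℝ (⊤ : ℕ∞) Y → ContDiff ℝ (⊤ : ℕ∞) Z → ∀ p,
      fderiv ℝ (fun q => G q (Y q) (Z q)) p (X p)
        = G p (conn X Y p) (Z p) + G p (Y p) (conn X Z p))
    {lam mu : E₁ × E₂ → ℝ} (hlams : ContDiff ℝ (⊤ : ℕ∞) lam) (hmus : ContDiff ℝ (⊤ : ℕ∞) mu)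
    {Sc : E₁ × E₂ → Module.End ℝ (E₁ × E₂)}
    (hSc : ∀ p u, Sc p u = (lam p • u.1, mu p • u.2))
    (hCod : ∀ X Y, ContDiff ℝ (⊤ : ℕ∞) X → ContDiff ℝ (⊤ : ℕ∞) Y → ∀ p,
      conn X (fun q => Sc q (Y q)) p - Sc p (conn X Y p)
        = conn Y (fun q => Sc q (X q)) p - Sc p (conn Y X p)) :
    ∃ A : ℝ, ∀ p, lam p = A := by
  refine ⟨lam 0, fun p => ?_⟩
  exact is_const_of_fderiv_eq_zero (hlams.differentiable (by simp))
    (keyLam hd1 hg₁ hg₂ hG hTF hMC hlams hmus hSc hCod) p 0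

end key
/-- A Codazzi tensor `S = λΠ₁ + μΠ₂` with `λ ≠ μ` everywhere on a Riemannian product
`M₁ × M₂` with both factors of dimension `> 1` has `λ` and `μ` constant. -/
theorem stmt15 {E₁ E₂ : Type*} [NormedAddCommGroup E₁] [NormedSpace ℝ E₁]
    [NormedAddCommGroup E₂] [NormedSpace ℝ E₂]
    [FiniteDimensional ℝ E₁] [FiniteDimensional ℝ E₂]
    (hd1 : 1 < Module.finrank ℝ E₁) (hd2 : 1 < Module.finrank ℝ E₂)
    (g₁ : E₁ → E₁ →ₗ[ℝ] E₁ →ₗ[ℝ] ℝ) (g₂ : E₂ → E₂ →ₗ[ℝ] E₂ →ₗ[ℝ] ℝ)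
    (hg₁ : ∀ x u, u ≠ 0 → 0 < g₁ x u u) (hg₂ : ∀ y u, u ≠ 0 → 0 < g₂ y u u)
    -- the product metric:
    (G : E₁ × E₂ → (E₁ × E₂) →ₗ[ℝ] (E₁ × E₂) →ₗ[ℝ] ℝ)
    (hG : ∀ p u v, G p u v = g₁ p.1 u.1 v.1 + g₂ p.2 u.2 v.2)
    -- its Levi-Civita connection:
    (conn : (E₁ × E₂ → E₁ × E₂) → (E₁ × E₂ → E₁ × E₂) → (E₁ × E₂ → E₁ × E₂))
    (hTF : ∀ X Y, ∀ p, conn X Y p - conn Y X p = fderiv ℝ Y p (X p) - fderiv ℝ X p (Y p))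
    (hMC : ∀ X Y Z, ContDiff ℝ (⊤ : ℕ∞) Y → ContDiff ℝ (⊤ : ℕ∞) Z → ∀ p,
      fderiv ℝ (fun q => G q (Y q) (Z q)) p (X p)
        = G p (conn X Y p) (Z p) + G p (Y p) (conn X Z p))
    (lam mu : E₁ × E₂ → ℝ) (hlams : ContDiff ℝ (⊤ : ℕ∞) lam) (hmus : ContDiff ℝ (⊤ : ℕ∞) mu)
    (hlm : ∀ p, lam p ≠ mu p)
    -- the tensor `S = λΠ₁ + μΠ₂`:
    (Sc : E₁ × E₂ → Module.End ℝ (E₁ × E₂))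
    (hSc : ∀ p u, Sc p u = (lam p • u.1, mu p • u.2))
    -- the Codazzi equation:
    (hCod : ∀ X Y, ContDiff ℝ (⊤ : ℕ∞) X → ContDiff ℝ (⊤ : ℕ∞) Y → ∀ p,
      conn X (fun q => Sc q (Y q)) p - Sc p (conn X Y p)
        = conn Y (fun q => Sc q (X q)) p - Sc p (conn Y X p)) :
    (∃ A : ℝ, ∀ p, lam p = A) ∧ ∃ B : ℝ, ∀ p, mu p = B := by
  constructor
  · exact constLam hd1 hg₁ hg₂ hG hTF hMC hlams hmus hSc hCod
  -- the μ-side: transport everything through the swap equivalence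
  set e : (E₂ × E₁) ≃L[ℝ] (E₁ × E₂) := ContinuousLinearEquiv.prodComm ℝ E₂ E₁ with hedef
  have he_app : ∀ r : E₂ × E₁, e r = (r.2, r.1) := fun r => rfl
  have hes_app : ∀ r : E₁ × E₂, e.symm r = (r.2, r.1) := fun r => rfl
  -- transported metric
  set G' : (E₂ × E₁) → (E₂ × E₁) →ₗ[ℝ] (E₂ × E₁) →ₗ[ℝ] ℝ :=
    fun p' => (G (e p')).compl₁₂ (e.toLinearEquiv.toLinearMap) (e.toLinearEquiv.toLinearMap)
    with hG'def
  have hG'app : ∀ (p' u v : E₂ × E₁), G' p' u v = G (e p') (e u) (e v) := by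
    intro p' u v
    rw [hG'def]
    rfl
  have hG' : ∀ (p u v : E₂ × E₁), G' p u v = g₂ p.1 u.1 v.1 + g₁ p.2 u.2 v.2 := by
    intro p u v
    rw [hG'app, hG, he_app, he_app, he_app]
    exact add_comm _ _
  -- transported connection
  set conn' : ((E₂ × E₁) → (E₂ × E₁)) → ((E₂ × E₁) → (E₂ × E₁)) → ((E₂ × E₁) → (E₂ × E₁)) :=
    fun X Y p' => e.symm (conn (fun r => e (X (e.symm r))) (fun r => e (Y (e.symm r))) (e p'))
    with hconn'def
  -- transported fderiv facts
  have hfd : ∀ (Z : E₂ × E₁ → E₂ × E₁) (q w : E₂ × E₁),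
      fderiv ℝ (fun r => e (Z (e.symm r))) (e q) (e w) = e (fderiv ℝ Z q w) := by
    intro Z q w
    have h1 : (fun r => e (Z (e.symm r))) = (⇑e) ∘ (Z ∘ ⇑e.symm) := rfl
    rw [h1, e.comp_fderiv, e.symm.comp_right_fderiv]
    simp
  have hfds : ∀ (F : E₁ × E₂ → ℝ) (q w : E₂ × E₁),
      fderiv ℝ (fun r => F (e r)) q w = fderiv ℝ F (e q) (e w) := by
    intro F q w
    have h1 : (fun r => F (e r)) = F ∘ ⇑e := rfl
    rw [h1, e.comp_right_fderiv]
    rfl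
  have hsm : ∀ (Z : E₂ × E₁ → E₂ × E₁), ContDiff ℝ (⊤ : ℕ∞) Z →
      ContDiff ℝ (⊤ : ℕ∞) (fun r => e (Z (e.symm r))) := by
    intro Z hZ
    exact e.contDiff.comp (hZ.comp e.symm.contDiff)
  -- torsion-free
  have hTF' : ∀ X Y, ∀ p, conn' X Y p - conn' Y X p
      = fderiv ℝ Y p (X p) - fderiv ℝ X p (Y p) := by
    intro X Y p
    have h := hTF (fun r => e (X (e.symm r))) (fun r => e (Y (e.symm r))) (e p)
    have hXv : e (X (e.symm (e p))) = e (X p) := by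
      simp
    have hYv : e (Y (e.symm (e p))) = e (Y p) := by
      simp
    rw [hXv, hYv, hfd Y p (X p), hfd X p (Y p)] at h
    show e.symm (conn (fun r => e (X (e.symm r))) (fun r => e (Y (e.symm r))) (e p))
          - e.symm (conn (fun r => e (Y (e.symm r))) (fun r => e (X (e.symm r))) (e p))
        = fderiv ℝ Y p (X p) - fderiv ℝ X p (Y p)
    calc e.symm (conn (fun r => e (X (e.symm r))) (fun r => e (Y (e.symm r))) (e p))
          - e.symm (conn (fun r => e (Y (e.symm r))) (fun r => e (X (e.symm r))) (e p))
        = e.symm (conn (fun r => e (X (e.symm r))) (fun r => e (Y (e.symm r))) (e p)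
            - conn (fun r => e (Y (e.symm r))) (fun r => e (X (e.symm r))) (e p)) := by
          rw [map_sub]
      _ = e.symm (e (fderiv ℝ Y p (X p)) - e (fderiv ℝ X p (Y p))) := by rw [h]
      _ = fderiv ℝ Y p (X p) - fderiv ℝ X p (Y p) := by
          rw [map_sub]
          simp
  -- metric compatibility
  have hMC' : ∀ X Y Z, ContDiff ℝ (⊤ : ℕ∞) Y → ContDiff ℝ (⊤ : ℕ∞) Z → ∀ p,
      fderiv ℝ (fun q => G' q (Y q) (Z q)) p (X p)
        = G' p (conn' X Y p) (Z p) + G' p (Y p) (conn' X Z p) := by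
    intro X Y Z hY hZ p
    have h := hMC (fun r => e (X (e.symm r))) (fun r => e (Y (e.symm r)))
      (fun r => e (Z (e.symm r))) (hsm Y hY) (hsm Z hZ) (e p)
    have hXv : e (X (e.symm (e p))) = e (X p) := by simp
    have hYv : e (Y (e.symm (e p))) = e (Y p) := by simp
    have hZv : e (Z (e.symm (e p))) = e (Z p) := by simp
    rw [hXv, hYv, hZv] at h
    have hfun : (fun q => G' q (Y q) (Z q))
        = (fun r => G r (e (Y (e.symm r))) (e (Z (e.symm r)))) ∘ ⇑e := by
      funext q
      rw [hG'app]
      simp [Function.comp]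
    rw [hfun, e.comp_right_fderiv]
    have hc1 : e (conn' X Y p)
        = conn (fun r => e (X (e.symm r))) (fun r => e (Y (e.symm r))) (e p) := by
      show e (e.symm _) = _
      rw [e.apply_symm_apply]
    have hc2 : e (conn' X Z p)
        = conn (fun r => e (X (e.symm r))) (fun r => e (Z (e.symm r))) (e p) := by
      show e (e.symm _) = _
      rw [e.apply_symm_apply]
    rw [hG'app, hG'app, hc1, hc2]
    simpa using h
  -- transported tensor
  set Sc' : (E₂ × E₁) → Module.End ℝ (E₂ × E₁) :=
    fun p' => (e.symm.toLinearEquiv.toLinearMap).comp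
      (((Sc (e p')) : (E₁ × E₂) →ₗ[ℝ] (E₁ × E₂)).comp (e.toLinearEquiv.toLinearMap))
    with hSc'def
  have hSc'app : ∀ (p' : E₂ × E₁) (u : E₂ × E₁), Sc' p' u = e.symm (Sc (e p') (e u)) := by
    intro p' u
    rw [hSc'def]
    rfl
  have hSc' : ∀ (p : E₂ × E₁) (u : E₂ × E₁),
      Sc' p u = ((mu (e p)) • u.1, (lam (e p)) • u.2) := by
    intro p u
    rw [hSc'app, hSc, he_app, hes_app]
    simp [he_app]
  -- Codazzi
  have hCod' : ∀ X Y, ContDiff ℝ (⊤ : ℕ∞) X → ContDiff ℝ (⊤ : ℕ∞) Y → ∀ p,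
      conn' X (fun q => Sc' q (Y q)) p - Sc' p (conn' X Y p)
        = conn' Y (fun q => Sc' q (X q)) p - Sc' p (conn' Y X p) := by
    intro X Y hX hY p
    have h := hCod (fun r => e (X (e.symm r))) (fun r => e (Y (e.symm r)))
      (hsm X hX) (hsm Y hY) (e p)
    have hW : (fun r => e ((fun q => Sc' q (Y q)) (e.symm r)))
        = (fun q => Sc q (e (Y (e.symm q)))) := by
      funext r
      show e (Sc' (e.symm r) (Y (e.symm r))) = _
      rw [hSc'app]
      simp
    have hW' : (fun r => e ((fun q => Sc' q (X q)) (e.symm r)))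
        = (fun q => Sc q (e (X (e.symm q)))) := by
      funext r
      show e (Sc' (e.symm r) (X (e.symm r))) = _
      rw [hSc'app]
      simp
    have hL1 : conn' X (fun q => Sc' q (Y q)) p
        = e.symm (conn (fun r => e (X (e.symm r)))
            (fun q => Sc q (e (Y (e.symm q)))) (e p)) := by
      show e.symm (conn (fun r => e (X (e.symm r)))
          (fun r => e ((fun q => Sc' q (Y q)) (e.symm r))) (e p)) = _
      rw [hW]
    have hL1' : conn' Y (fun q => Sc' q (X q)) p
        = e.symm (conn (fun r => e (Y (e.symm r)))
            (fun q => Sc q (e (X (e.symm q)))) (e p)) := by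
      show e.symm (conn (fun r => e (Y (e.symm r)))
          (fun r => e ((fun q => Sc' q (X q)) (e.symm r))) (e p)) = _
      rw [hW']
    have hL2 : Sc' p (conn' X Y p)
        = e.symm (Sc (e p) (conn (fun r => e (X (e.symm r)))
            (fun r => e (Y (e.symm r))) (e p))) := by
      rw [hSc'app]
      have hc : e (conn' X Y p) = conn (fun r => e (X (e.symm r)))
          (fun r => e (Y (e.symm r))) (e p) := by
        show e (e.symm _) = _
        rw [e.apply_symm_apply]
      rw [hc]
    have hL2' : Sc' p (conn' Y X p)
        = e.symm (Sc (e p) (conn (fun r => e (Y (e.symm r)))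
            (fun r => e (X (e.symm r))) (e p))) := by
      rw [hSc'app]
      have hc : e (conn' Y X p) = conn (fun r => e (Y (e.symm r)))
          (fun r => e (X (e.symm r))) (e p) := by
        show e (e.symm _) = _
        rw [e.apply_symm_apply]
      rw [hc]
    rw [hL1, hL1', hL2, hL2', ← map_sub e.symm, ← map_sub e.symm]
    exact congrArg _ h
  -- apply the λ-side result to the transported data
  have hlams' : ContDiff ℝ (⊤ : ℕ∞) (fun r : E₂ × E₁ => mu (e r)) := hmus.comp e.contDiff
  have hmus' : ContDiff ℝ (⊤ : ℕ∞) (fun r : E₂ × E₁ => lam (e r)) := hlams.comp e.contDiff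
  have hmu' := keyLam (E₁ := E₂) (E₂ := E₁)
    (lam := fun r : E₂ × E₁ => mu (e r)) (mu := fun r : E₂ × E₁ => lam (e r))
    hd2 hg₂ hg₁ hG' hTF' hMC' hlams' hmus' hSc' hCod'
  -- translate back
  have hmuzero : ∀ (p : E₁ × E₂), fderiv ℝ mu p = 0 := by
    intro p
    refine ContinuousLinearMap.ext fun w => ?_
    have h := hmu' (e.symm p)
    have h2 := congrArg (fun L : (E₂ × E₁) →L[ℝ] ℝ => L (e.symm w)) h
    simp only [ContinuousLinearMap.zero_apply] at h2
    have h2' : fderiv ℝ (fun r => mu (e r)) (e.symm p) (e.symm w) = 0 := h2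
    rw [hfds mu (e.symm p) (e.symm w)] at h2'
    simp only [e.apply_symm_apply] at h2'
    simpa using h2'
  refine ⟨mu 0, fun p => ?_⟩
  exact is_const_of_fderiv_eq_zero (hmus.differentiable (by simp)) hmuzero p 0
end

section
/- Let φ : I → 𝕊² ⊂ ℝ³ be a unit-speed curve with nowhere vanishing geodesic curvature k and unit normal n in 𝕊² with {φ', n} positively oriented, so φ'' = kn − φ and n' = −kφ'. Let (h₁,h₂,h₃) solve h₁' = kh₂ + (A−1)h₃, h₂' = −kh₁, h₃' = h₁, with initial condition chosen so that h₁² + h₂² + (1−A)h₃² = 0. Set γ = h₁φ' + h₂n + h₃φ and φ̃ = φ − 2h₃γ/⟨γ,γ⟩. Then φ̃ takes values in 𝕊² and is unit-speed; moreover γ' = A h₃ φ' and ⟨γ, φ'⟩ = h₃' = h₁. -/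
open scoped RealInnerProductSpace

/-- Ribaucour transform of a spherical curve: if `φ : I → 𝕊²` is unit-speed with Frenet frame
`{φ', n}` and curvature `k ≠ 0`, and `(h₁,h₂,h₃)` solves the linear system with vanishing
first integral, then for `γ = h₁φ' + h₂n + h₃φ` the curve `φ̃ = φ - 2h₃⟨γ,γ⟩⁻¹γ` lies in `𝕊²`
and is unit-speed; moreover `γ' = Ah₃φ'` and `⟨γ,φ'⟩ = h₁`. -/
theorem stmt17 (I : Set ℝ) (A : ℝ)
    (φc φd nv : ℝ → EuclideanSpace ℝ (Fin 3)) (k h₁ h₂ h₃ : ℝ → ℝ)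
    (hunit : ∀ s ∈ I, ‖φc s‖ = 1)
    (hd : ∀ s ∈ I, HasDerivAt φc (φd s) s)
    (hspeed : ∀ s ∈ I, ‖φd s‖ = 1)
    (hnorm : ∀ s ∈ I, ‖nv s‖ = 1)
    (hperp1 : ∀ s ∈ I, ⟪φc s, φd s⟫ = 0)
    (hperp2 : ∀ s ∈ I, ⟪φc s, nv s⟫ = 0)
    (hperp3 : ∀ s ∈ I, ⟪φd s, nv s⟫ = 0)
    (hk : ∀ s ∈ I, k s ≠ 0)
    (hfrenet1 : ∀ s ∈ I, HasDerivAt φd (k s • nv s - φc s) s)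
    (hfrenet2 : ∀ s ∈ I, HasDerivAt nv (-(k s) • φd s) s)
    (hs1 : ∀ s ∈ I, HasDerivAt h₁ (k s * h₂ s + (A - 1) * h₃ s) s)
    (hs2 : ∀ s ∈ I, HasDerivAt h₂ (-(k s) * h₁ s) s)
    (hs3 : ∀ s ∈ I, HasDerivAt h₃ (h₁ s) s)
    (hfint : ∀ s ∈ I, h₁ s ^ 2 + h₂ s ^ 2 + (1 - A) * h₃ s ^ 2 = 0)
    (γ : ℝ → EuclideanSpace ℝ (Fin 3))
    (hγ : ∀ s, γ s = h₁ s • φd s + h₂ s • nv s + h₃ s • φc s)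
    (hγ0 : ∀ s ∈ I, ⟪γ s, γ s⟫ ≠ 0)
    (φt : ℝ → EuclideanSpace ℝ (Fin 3))
    (hφt : ∀ s, φt s = φc s - (2 * h₃ s / ⟪γ s, γ s⟫) • γ s) :
    ∀ s ∈ I, ‖φt s‖ = 1
      ∧ ⟪γ s, φd s⟫ = h₁ s
      ∧ HasDerivAt γ ((A * h₃ s) • φd s) s
      ∧ ∃ d, HasDerivAt φt d s ∧ ‖d‖ = 1 := by
  intro s hs
  have i11 : ⟪φd s, φd s⟫ = 1 := by
    rw [real_inner_self_eq_norm_sq, hspeed s hs]; norm_num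
  have i22 : ⟪nv s, nv s⟫ = 1 := by
    rw [real_inner_self_eq_norm_sq, hnorm s hs]; norm_num
  have i33 : ⟪φc s, φc s⟫ = 1 := by
    rw [real_inner_self_eq_norm_sq, hunit s hs]; norm_num
  have p1 := hperp1 s hs
  have p2 := hperp2 s hs
  have p3 := hperp3 s hs
  have p1' : ⟪φd s, φc s⟫ = 0 := by rw [real_inner_comm]; exact p1
  have p2' : ⟪nv s, φc s⟫ = 0 := by rw [real_inner_comm]; exact p2
  have p3' : ⟪nv s, φd s⟫ = 0 := by rw [real_inner_comm]; exact p3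
  have e1 : ⟪γ s, φd s⟫ = h₁ s := by
    simp only [hγ, inner_add_left, real_inner_smul_left, i11, p1, p1', p3']; ring
  have e3 : ⟪γ s, φc s⟫ = h₃ s := by
    simp only [hγ, inner_add_left, real_inner_smul_left, i33, p1', p2']; ring
  have e3' : ⟪φc s, γ s⟫ = h₃ s := by rw [real_inner_comm]; exact e3
  have gg : ⟪γ s, γ s⟫ = A * h₃ s ^ 2 := by
    simp only [hγ, inner_add_left, inner_add_right, real_inner_smul_left,
      real_inner_smul_right, i11, i22, i33, p1, p2, p3, p1', p2', p3']
    ring_nf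
    linear_combination hfint s hs
  have gne := hγ0 s hs
  have hAh : A * h₃ s ^ 2 ≠ 0 := gg ▸ gne
  have hA : A ≠ 0 := fun h => hAh (by rw [h]; ring)
  have hh3 : h₃ s ≠ 0 := fun h => hAh (by rw [h]; ring)
  -- derivative of γ
  have hdγ : HasDerivAt γ ((A * h₃ s) • φd s) s := by
    have hγe : γ = fun t => h₁ t • φd t + h₂ t • nv t + h₃ t • φc t := funext hγ
    rw [hγe]
    have d1 := (hs1 s hs).smul (hfrenet1 s hs)
    have d2 := (hs2 s hs).smul (hfrenet2 s hs)
    have d3 := (hs3 s hs).smul (hd s hs)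
    refine ((d1.add d2).add d3).congr_deriv ?_
    module
  -- norm of φt s
  have nφt : ‖φt s‖ = 1 := by
    have h2 : ⟪φt s, φt s⟫ = 1 := by
      rw [hφt, gg]
      simp only [inner_sub_left, inner_sub_right, real_inner_smul_left,
        real_inner_smul_right, i33, e3, e3', gg]
      field_simp
      ring
    have h3' : ‖φt s‖ ^ 2 = 1 := by rw [← real_inner_self_eq_norm_sq]; exact h2
    nlinarith [norm_nonneg (φt s)]
  refine ⟨nφt, e1, hdγ, ?_⟩
  -- derivative of φt
  have hG : HasDerivAt (fun t => ⟪γ t, γ t⟫) (2 * (A * h₃ s * h₁ s)) s := by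
    have := HasDerivAt.inner (𝕜 := ℝ) hdγ hdγ
    refine this.congr_deriv ?_
    rw [real_inner_smul_right, real_inner_smul_left, e1, real_inner_comm, e1]
    ring
  have hnum : HasDerivAt (fun t => 2 * h₃ t) (2 * h₁ s) s := (hs3 s hs).const_mul 2
  have hc : HasDerivAt (fun t => 2 * h₃ t / ⟪γ t, γ t⟫)
      ((2 * h₁ s * ⟪γ s, γ s⟫ - 2 * h₃ s * (2 * (A * h₃ s * h₁ s))) / ⟪γ s, γ s⟫ ^ 2) s :=
    hnum.div hG gne
  have hdφt : HasDerivAt φt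
      (φd s - ((2 * h₃ s / ⟪γ s, γ s⟫) • ((A * h₃ s) • φd s) +
        ((2 * h₁ s * ⟪γ s, γ s⟫ - 2 * h₃ s * (2 * (A * h₃ s * h₁ s))) / ⟪γ s, γ s⟫ ^ 2) • γ s)) s := by
    have hφte : φt = fun t => φc t - (2 * h₃ t / ⟪γ t, γ t⟫) • γ t := funext hφt
    rw [hφte]
    exact (hd s hs).sub (hc.smul hdγ)
  refine ⟨_, hdφt, ?_⟩
  set d := φd s - ((2 * h₃ s / ⟪γ s, γ s⟫) • ((A * h₃ s) • φd s) +
        ((2 * h₁ s * ⟪γ s, γ s⟫ - 2 * h₃ s * (2 * (A * h₃ s * h₁ s))) / ⟪γ s, γ s⟫ ^ 2) • γ s) with hdef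
  have e1' : ⟪φd s, γ s⟫ = h₁ s := by rw [real_inner_comm]; exact e1
  have hdsimp : d = -φd s + (2 * h₁ s / (A * h₃ s ^ 2)) • γ s := by
    rw [hdef, gg]
    match_scalars <;> field_simp <;> ring
  have h2 : ⟪d, d⟫ = 1 := by
    rw [hdsimp]
    simp only [inner_add_left, inner_add_right, inner_neg_left, inner_neg_right,
      real_inner_smul_left, real_inner_smul_right, i11, e1, e1', gg]
    field_simp
    ring
  have h3' : ‖d‖ ^ 2 = 1 := by rw [← real_inner_self_eq_norm_sq]; exact h2
  nlinarith [norm_nonneg d]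
end

section
/- Let S ⊂ ℝ^{n+1} be a hypersphere with constant mean curvature H with respect to a unit normal field N, and let Ψ : ℝ^{n+1} → 𝔼^{n+1} ⊂ 𝕃^{n+3} be the isometric embedding into the light cone model. Then v = HΨ + Ψ_*N is a constant spacelike unit vector in 𝕃^{n+3}, and Ψ(S) = 𝔼^{n+1} ∩ {v}^⊥. -/
open scoped RealInnerProductSpace

/-- The Lorentzian inner product of signature `(n+2, 1)` on `ℝ^{n+3}`. -/
noncomputable def mink (n : ℕ) (x y : Fin (n + 3) → ℝ) : ℝ :=
  (∑ i : Fin (n + 2), x i.castSucc * y i.castSucc) - x (Fin.last (n + 2)) * y (Fin.last (n + 2))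

/-!
In the light cone model `Ψ x = p₀ + D x - ‖x‖²/2 • w`, and the Lorentzian product of two such
points is `⟨Ψ x, Ψ y⟩ = -‖x - y‖²/2`. Hence the sphere of centre `q₀` and radius `r` is cut out of
`{⟨p, p⟩ = 0, ⟨p, w⟩ = 1}` by the hyperplane orthogonal to `σ = Ψ q₀ + r²/2 • w`, a vector with
`⟨σ, σ⟩ = r²`. Expanding `H Ψ q + dΨ_q (H (q₀ - q))` with `‖q - q₀‖ = r` gives exactly `H σ`, which
is therefore independent of `q`, and a unit vector when `r = 1/|H|`.
-/

section Minkowski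

variable {n : ℕ}

lemma mink_comm (x y : Fin (n + 3) → ℝ) : mink n x y = mink n y x := by
  simp only [mink, mul_comm]

lemma mink_add_left (x y z : Fin (n + 3) → ℝ) :
    mink n (x + y) z = mink n x z + mink n y z := by
  simp only [mink, Pi.add_apply, add_mul, Finset.sum_add_distrib]
  ring

lemma mink_sub_left (x y z : Fin (n + 3) → ℝ) :
    mink n (x - y) z = mink n x z - mink n y z := by
  simp only [mink, Pi.sub_apply, sub_mul, Finset.sum_sub_distrib]
  ring

lemma mink_smul_left (c : ℝ) (x y : Fin (n + 3) → ℝ) :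
    mink n (c • x) y = c * mink n x y := by
  simp only [mink, Pi.smul_apply, smul_eq_mul, Finset.mul_sum, mul_assoc, mul_sub]

lemma mink_add_right (x y z : Fin (n + 3) → ℝ) :
    mink n x (y + z) = mink n x y + mink n x z := by
  rw [mink_comm, mink_add_left, mink_comm y, mink_comm z]

lemma mink_sub_right (x y z : Fin (n + 3) → ℝ) :
    mink n x (y - z) = mink n x y - mink n x z := by
  rw [mink_comm, mink_sub_left, mink_comm y, mink_comm z]

lemma mink_smul_right (c : ℝ) (x y : Fin (n + 3) → ℝ) :
    mink n x (c • y) = c * mink n x y := by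
  rw [mink_comm, mink_smul_left, mink_comm]

end Minkowski

section LightCone

variable {E F : Type*} [NormedAddCommGroup E] [InnerProductSpace ℝ E]

noncomputable def lightConeEmbed [AddCommGroup F] [Module ℝ F] (p₀ w : F) (D : E →ₗ[ℝ] F)
    (x : E) : F :=
  p₀ + D x - (‖x‖ ^ 2 / 2) • w

noncomputable def sphereVector [AddCommGroup F] [Module ℝ F] (p₀ w : F) (D : E →ₗ[ℝ] F)
    (q₀ : E) (r : ℝ) : F :=
  lightConeEmbed p₀ w D q₀ + (r ^ 2 / 2) • w

/-- `D u - ⟪q, u⟫ • w` is the differential `dΨ_q u` of the light cone embedding. -/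
lemma smul_lightConeEmbed_add_differential_eq [AddCommGroup F] [Module ℝ F] (p₀ w : F)
    (D : E →ₗ[ℝ] F) (H : ℝ) {q₀ q : E} {r : ℝ} (hq : ‖q - q₀‖ = r) :
    H • lightConeEmbed p₀ w D q + (D (H • (q₀ - q)) - ⟪q, H • (q₀ - q)⟫ • w) =
      H • sphereVector p₀ w D q₀ r := by
  have hr : ‖q‖ ^ 2 - 2 * ⟪q, q₀⟫ + ‖q₀‖ ^ 2 = r ^ 2 := by
    rw [← hq, norm_sub_sq_real]
  simp only [sphereVector, lightConeEmbed, map_smul, map_sub, inner_smul_right,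
    inner_sub_right, real_inner_self_eq_norm_sq, ← hr]
  module

structure IsLightConeFrame (n : ℕ) (p₀ w : Fin (n + 3) → ℝ) (D : E →ₗ[ℝ] (Fin (n + 3) → ℝ)) :
    Prop where
  mink_w_self : mink n w w = 0
  mink_p₀_self : mink n p₀ p₀ = 0
  mink_p₀_w : mink n p₀ w = 1
  mink_map_map : ∀ u v, mink n (D u) (D v) = ⟪u, v⟫
  mink_map_w : ∀ u, mink n (D u) w = 0
  mink_map_p₀ : ∀ u, mink n (D u) p₀ = 0

namespace IsLightConeFrame

variable {n : ℕ} {p₀ w : Fin (n + 3) → ℝ} {D : E →ₗ[ℝ] (Fin (n + 3) → ℝ)}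
  (h : IsLightConeFrame n p₀ w D)
include h

lemma mink_lightConeEmbed_w (x : E) : mink n (lightConeEmbed p₀ w D x) w = 1 := by
  simp [lightConeEmbed, mink_add_left, mink_sub_left, mink_smul_left, h.mink_w_self,
    h.mink_p₀_w, h.mink_map_w]

lemma mink_lightConeEmbed_lightConeEmbed (x y : E) :
    mink n (lightConeEmbed p₀ w D x) (lightConeEmbed p₀ w D y) = -(‖x - y‖ ^ 2 / 2) := by
  simp only [lightConeEmbed, mink_add_left, mink_add_right, mink_sub_left, mink_sub_right,
    mink_smul_left, mink_smul_right, h.mink_w_self, h.mink_p₀_self, h.mink_p₀_w, mink_comm w,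
    h.mink_map_map, h.mink_map_w, h.mink_map_p₀, mink_comm p₀ (D _), norm_sub_sq_real]
  ring

lemma mink_lightConeEmbed_self (x : E) :
    mink n (lightConeEmbed p₀ w D x) (lightConeEmbed p₀ w D x) = 0 := by
  simp [h.mink_lightConeEmbed_lightConeEmbed]

lemma mink_lightConeEmbed_sphereVector (x q₀ : E) (r : ℝ) :
    mink n (lightConeEmbed p₀ w D x) (sphereVector p₀ w D q₀ r) = (r ^ 2 - ‖x - q₀‖ ^ 2) / 2 := by
  rw [sphereVector, mink_add_right, mink_smul_right, h.mink_lightConeEmbed_lightConeEmbed,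
    h.mink_lightConeEmbed_w]
  ring

lemma mink_sphereVector_self (q₀ : E) (r : ℝ) :
    mink n (sphereVector p₀ w D q₀ r) (sphereVector p₀ w D q₀ r) = r ^ 2 := by
  nth_rw 1 [sphereVector]
  rw [mink_add_left, mink_smul_left, h.mink_lightConeEmbed_sphereVector, mink_comm, sphereVector,
    mink_add_left, mink_smul_left, h.mink_lightConeEmbed_w, h.mink_w_self]
  simp

lemma exists_lightConeEmbed_eq
    (hDsurj : ∀ q, mink n q w = 0 → mink n q p₀ = 0 → q ∈ LinearMap.range D)
    {p : Fin (n + 3) → ℝ} (hpp : mink n p p = 0) (hpw : mink n p w = 1) :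
    ∃ x, lightConeEmbed p₀ w D x = p := by
  set α := mink n p p₀
  obtain ⟨x, hx⟩ := hDsurj (p - p₀ - α • w)
    (by simp [mink_sub_left, mink_smul_left, h.mink_w_self, h.mink_p₀_w, hpw])
    (by simp [mink_sub_left, mink_smul_left, h.mink_p₀_self, mink_comm w, h.mink_p₀_w, α])
  have hp : p = p₀ + D x + α • w := by rw [hx]; abel
  have hα : α = -(‖x‖ ^ 2 / 2) := by
    rw [hp] at hpp
    simp only [mink_add_left, mink_add_right, mink_smul_left, mink_smul_right, h.mink_w_self,
      h.mink_p₀_self, h.mink_p₀_w, mink_comm w, h.mink_map_map, h.mink_map_w, h.mink_map_p₀,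
      mink_comm p₀ (D _), real_inner_self_eq_norm_sq] at hpp
    linarith
  refine ⟨x, ?_⟩
  rw [hp, hα, lightConeEmbed]
  module

lemma lightConeEmbed_image_sphere
    (hDsurj : ∀ q, mink n q w = 0 → mink n q p₀ = 0 → q ∈ LinearMap.range D)
    (q₀ : E) {r : ℝ} (hr : 0 ≤ r) :
    lightConeEmbed p₀ w D '' Metric.sphere q₀ r =
      {p | mink n p p = 0 ∧ mink n p w = 1 ∧ mink n p (sphereVector p₀ w D q₀ r) = 0} := by
  have hsphere (x : E) :
      mink n (lightConeEmbed p₀ w D x) (sphereVector p₀ w D q₀ r) = 0 ↔ x ∈ Metric.sphere q₀ r := by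
    rw [h.mink_lightConeEmbed_sphereVector, mem_sphere_iff_norm, div_eq_zero_iff,
      or_iff_left two_ne_zero, sub_eq_zero, eq_comm, pow_left_inj₀ (norm_nonneg _) hr two_ne_zero]
  ext p
  constructor
  · rintro ⟨x, hx, rfl⟩
    exact ⟨h.mink_lightConeEmbed_self x, h.mink_lightConeEmbed_w x, (hsphere x).2 hx⟩
  · rintro ⟨hpp, hpw, hpσ⟩
    obtain ⟨x, rfl⟩ := h.exists_lightConeEmbed_eq hDsurj hpp hpw
    exact ⟨x, (hsphere x).1 hpσ, rfl⟩

end IsLightConeFrame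

end LightCone

/-- For a hypersphere `S ⊂ ℝ^{n+1}` with constant mean curvature `H` and unit normal `N`
(shape operator `H·id`), the vector `v = HΨ + Ψ_*N` is a constant spacelike unit vector in
Minkowski space, and `Ψ(S) = 𝔼^{n+1} ∩ {v}^⊥` in the light cone model. -/
theorem stmt18 {n : ℕ}
    (w p₀ : Fin (n + 3) → ℝ)
    (hw : mink n w w = 0) (hp₀ : mink n p₀ p₀ = 0) (hpw : mink n p₀ w = 1)
    (D : EuclideanSpace ℝ (Fin (n + 1)) →ₗ[ℝ] (Fin (n + 3) → ℝ))
    (hDiso : ∀ u v, mink n (D u) (D v) = ⟪u, v⟫)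
    (hDperp : ∀ u, mink n (D u) w = 0 ∧ mink n (D u) p₀ = 0)
    (hDsurj : ∀ q : Fin (n + 3) → ℝ, mink n q w = 0 → mink n q p₀ = 0 → q ∈ LinearMap.range D)
    (Ψ : EuclideanSpace ℝ (Fin (n + 1)) → Fin (n + 3) → ℝ)
    (hΨ : ∀ x, Ψ x = p₀ + D x - (‖x‖ ^ 2 / 2) • w)
    (H : ℝ) (hH : H ≠ 0) (q₀ : EuclideanSpace ℝ (Fin (n + 1)))
    (S : Set (EuclideanSpace ℝ (Fin (n + 1)))) (hS : S = Metric.sphere q₀ |H|⁻¹)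
    (N : EuclideanSpace ℝ (Fin (n + 1)) → EuclideanSpace ℝ (Fin (n + 1)))
    (hN : ∀ q, N q = H • (q₀ - q))
    (v : EuclideanSpace ℝ (Fin (n + 1)) → Fin (n + 3) → ℝ)
    -- `v q = H Ψ(q) + dΨ_q(N q)`:
    (hv : ∀ q, v q = H • Ψ q + (D (N q) - ⟪q, N q⟫ • w)) :
    (∀ q ∈ S, ∀ q' ∈ S, v q = v q')
      ∧ (∀ q ∈ S, mink n (v q) (v q) = 1)
      ∧ ∀ q ∈ S, Ψ '' S = {p | mink n p p = 0 ∧ mink n p w = 1 ∧ mink n p (v q) = 0} := by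
  have hframe : IsLightConeFrame n p₀ w D :=
    ⟨hw, hp₀, hpw, hDiso, fun u => (hDperp u).1, fun u => (hDperp u).2⟩
  obtain rfl : Ψ = lightConeEmbed p₀ w D := funext hΨ
  set σ := sphereVector p₀ w D q₀ |H|⁻¹
  have hvσ : ∀ q ∈ S, v q = H • σ := by
    intro q hq
    rw [hS, mem_sphere_iff_norm] at hq
    rw [hv, hN, smul_lightConeEmbed_add_differential_eq p₀ w D H hq]
  refine ⟨fun q hq q' hq' => by rw [hvσ q hq, hvσ q' hq'], fun q hq => ?_, fun q hq => ?_⟩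
  · rw [hvσ q hq, mink_smul_left, mink_smul_right, hframe.mink_sphereVector_self, inv_pow, sq_abs]
    field_simp
  · simp only [hvσ q hq, mink_smul_right, mul_eq_zero, hH, false_or]
    rw [hS, hframe.lightConeEmbed_image_sphere hDsurj q₀ (by positivity)]
end
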